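/- arXiv:2303.12178 — 6 statements merged into one kernel-verified Lean document; each statement's English description precedes it below -/
import Mathlib

section
/- Let σ be a handle permutation of order n (a word of length 2n over {1,…,n} with each letter appearing exactly twice), and for each letter i let σ(i⁻) < σ(i⁺) denote its two positions. Define a relation on letters: i crosses j if σ(i⁻) < σ(j⁻) < σ(i⁺) < σ(j⁺). Then the shifted word σ[1] (cyclic shift of the positions by one) satisfies: if the letter at the last position of σ is m, then for letters i, j both distinct from m, i crosses j in σ if and only if i crosses j in σ[1]. -/
/-- The set of positions at which the letter `i` occurs in the word `w`. -/
def occs {n : ℕ} (w : Fin (2 * n) → Fin n) (i : Fin n) : Finset (Fin (2 * n)) :=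
  Finset.univ.filter fun p => w p = i

/-- `i` crosses `j` in the word `w`: for a word in which every letter appears exactly twice
this says `σ(i⁻) < σ(j⁻) < σ(i⁺) < σ(j⁺)`. -/
def Crosses {n : ℕ} (w : Fin (2 * n) → Fin n) (i j : Fin n) : Prop :=
  ∃ a b c d : Fin (2 * n),
    a ∈ occs w i ∧ c ∈ occs w i ∧ b ∈ occs w j ∧ d ∈ occs w j ∧ a < b ∧ b < c ∧ c < d

/-- for a handle permutation `w` of order `n` and its cyclic shift `w1`
(the word `σ_{2n} σ_1 … σ_{2n-1}`), letting `m` be the letter at the last position of `w`,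
any two letters `i, j` distinct from `m` cross in `w` if and only if they cross in `w1`. -/
theorem stmt8 (n : ℕ) (hn : 0 < n) (w : Fin (2 * n) → Fin n)
    (hw : ∀ i, (occs w i).card = 2)
    (w1 : Fin (2 * n) → Fin n)
    (hw1 : ∀ p : Fin (2 * n),
      w1 p = w ⟨(p.val + (2 * n - 1)) % (2 * n), Nat.mod_lt _ (by omega)⟩)
    (m : Fin n) (hm : m = w ⟨2 * n - 1, by omega⟩) :
    ∀ i j : Fin n, i ≠ m → j ≠ m → (Crosses w i j ↔ Crosses w1 i j) := by
  intro i j hi hj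
  -- occurrences of a letter ≠ m in w avoid the last position
  have key : ∀ (p : Fin (2 * n)) (k : Fin n), k ≠ m → p ∈ occs w k → p.val < 2 * n - 1 := by
    intro p k hk hp
    simp only [occs, Finset.mem_filter, Finset.mem_univ, true_and] at hp
    by_contra h
    have hpv : p.val = 2 * n - 1 := by have := p.isLt; omega
    have : p = ⟨2 * n - 1, by omega⟩ := Fin.ext hpv
    rw [this] at hp
    exact hk (hp ▸ hm ▸ rfl)
  have succ_mem : ∀ (p : Fin (2 * n)) (k : Fin n) (h : p.val + 1 < 2 * n),
      p ∈ occs w k → (⟨p.val + 1, h⟩ : Fin (2 * n)) ∈ occs w1 k := by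
    intro p k h hp
    simp only [occs, Finset.mem_filter, Finset.mem_univ, true_and] at hp ⊢
    rw [hw1]
    have e1 : p.val + 1 + (2 * n - 1) = p.val + 2 * n := by omega
    have e2 : (⟨(p.val + 1 + (2 * n - 1)) % (2 * n), Nat.mod_lt _ (by omega)⟩ : Fin (2 * n)) = p := by
      apply Fin.ext
      simp only [e1, Nat.add_mod_right, Nat.mod_eq_of_lt p.isLt]
    rw [e2]; exact hp
  -- occurrences of a letter ≠ m in w1 avoid position 0
  have key1 : ∀ (p : Fin (2 * n)) (k : Fin n), k ≠ m → p ∈ occs w1 k → 0 < p.val := by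
    intro p k hk hp
    simp only [occs, Finset.mem_filter, Finset.mem_univ, true_and] at hp
    by_contra h
    have hpv : p.val = 0 := by omega
    rw [hw1] at hp
    have e2 : (⟨(p.val + (2 * n - 1)) % (2 * n), Nat.mod_lt _ (by omega)⟩ : Fin (2 * n))
        = (⟨2 * n - 1, by omega⟩ : Fin (2 * n)) := by
      apply Fin.ext
      simp only [hpv, Nat.zero_add]
      exact Nat.mod_eq_of_lt (by omega)
    rw [e2] at hp
    exact hk (hp ▸ hm ▸ rfl)
  have pred_mem : ∀ (p : Fin (2 * n)) (k : Fin n), 0 < p.val →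
      p ∈ occs w1 k → (⟨p.val - 1, by have := p.isLt; omega⟩ : Fin (2 * n)) ∈ occs w k := by
    intro p k h hp
    simp only [occs, Finset.mem_filter, Finset.mem_univ, true_and] at hp ⊢
    rw [hw1] at hp
    have e1 : p.val + (2 * n - 1) = (p.val - 1) + 2 * n := by omega
    have e2 : (⟨(p.val + (2 * n - 1)) % (2 * n), Nat.mod_lt _ (by omega)⟩ : Fin (2 * n))
        = (⟨p.val - 1, by have := p.isLt; omega⟩ : Fin (2 * n)) := by
      apply Fin.ext
      simp only [e1, Nat.add_mod_right]
      exact Nat.mod_eq_of_lt (by have := p.isLt; omega)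
    rw [e2] at hp
    exact hp
  constructor
  · rintro ⟨a, b, c, d, ha, hc, hb, hd, hab, hbc, hcd⟩
    have hav := key a i hi ha
    have hbv := key b j hj hb
    have hcv := key c i hi hc
    have hdv := key d j hj hd
    have hab' : a.val < b.val := hab
    have hbc' : b.val < c.val := hbc
    have hcd' : c.val < d.val := hcd
    exact ⟨⟨a.val + 1, by omega⟩, ⟨b.val + 1, by omega⟩, ⟨c.val + 1, by omega⟩,
      ⟨d.val + 1, by omega⟩,
      succ_mem a i _ ha, succ_mem c i _ hc, succ_mem b j _ hb, succ_mem d j _ hd,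
      Fin.mk_lt_mk.mpr (by omega), Fin.mk_lt_mk.mpr (by omega),
      Fin.mk_lt_mk.mpr (by omega)⟩
  · rintro ⟨a, b, c, d, ha, hc, hb, hd, hab, hbc, hcd⟩
    have hav := key1 a i hi ha
    have hab' : a.val < b.val := hab
    have hbc' : b.val < c.val := hbc
    have hcd' : c.val < d.val := hcd
    exact ⟨⟨a.val - 1, by have := a.isLt; omega⟩, ⟨b.val - 1, by have := b.isLt; omega⟩,
      ⟨c.val - 1, by have := c.isLt; omega⟩, ⟨d.val - 1, by have := d.isLt; omega⟩,
      pred_mem a i hav ha, pred_mem c i (by omega) hc, pred_mem b j (by omega) hb,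
      pred_mem d j (by omega) hd,
      Fin.mk_lt_mk.mpr (by omega), Fin.mk_lt_mk.mpr (by omega),
      Fin.mk_lt_mk.mpr (by omega)⟩
end

section
/- Let k = F_2 and fix n ≥ 1. Let A be the free unital associative algebra over the semisimple ring k^n (with idempotents e_1,…,e_n) generated by symbols c_{ij}^p for all i, j ∈ {1,…,n} and integers p ≥ 0 representing counterclockwise arcs from point i to point j on a circle with n marked points passing p times through a base point (with c_{ij}^0 existing exactly when j > i). Define ∂_0(c_{ij}^p) = Σ c_{kj}^{p−l} c_{ik}^{l}, the sum over all (k,l) for which both chords exist and whose concatenation c_{kj}^{p−l} * c_{ik}^{l} = c_{ij}^{p}. Then ∂_0 extended by the Leibniz rule satisfies ∂_0² = 0. -/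
/-- Let `A` be the free unital algebra over `F₂` (over the idempotent ring
`F₂^n`) on the chords `c_{ij}^p` (counterclockwise arcs from the marked point `i` to the
marked point `j` on a circle with `n` marked points, passing `p` times through the base
point; the chord exists iff `p ≥ 1` or `i < j`).  The differential
`∂₀(c_{ij}^p) = Σ c_{kj}^{p-l} c_{ik}^l`, summed over all two-fold splittings of the chord,
extended by the Leibniz rule, squares to zero. -/
theorem stmt9 (n : ℕ) (A : Type*) [Ring A] [Algebra (ZMod 2) A]
    (e : Fin n → A) (c : Fin n → Fin n → ℕ → A)
    (horth : ∀ i j, e i * e j = if i = j then e i else 0)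
    (hsum : ∑ i, e i = 1)
    (hcompat : ∀ i j p, (0 < p ∨ i < j) → e j * c i j p = c i j p ∧ c i j p * e i = c i j p)
    (hzero : ∀ i j p, ¬(0 < p ∨ i < j) → c i j p = 0)
    (hgenerate : Algebra.adjoin (ZMod 2)
      (Set.range e ∪ {x : A | ∃ i j p, x = c i j p}) = ⊤)
    (D : A →ₗ[ZMod 2] A)
    (hleib : ∀ x y, D (x * y) = D x * y + x * D y)
    (hde : ∀ i, D (e i) = 0)
    (hdc : ∀ i j p, (0 < p ∨ i < j) →
      D (c i j p) = ∑ l ∈ Finset.range (p + 1), ∑ k : Fin n,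
        if (0 < l ∨ i < k) ∧ (l < p ∨ k < j) then c k j (p - l) * c i k l else 0) :
    D ∘ₗ D = 0 := by
  -- characteristic 2
  have h2 : ∀ x : A, x + x = 0 := by
    intro x
    have : (2 : ZMod 2) • x = 0 := by
      rw [show (2 : ZMod 2) = 0 by decide, zero_smul]
    rwa [two_smul] at this
  -- unconditional formula for D (c i j p)
  have hdc' : ∀ i j p, D (c i j p) =
      ∑ l ∈ Finset.range (p + 1), ∑ k : Fin n, c k j (p - l) * c i k l := by
    intro i j p
    by_cases h : 0 < p ∨ i < j
    · rw [hdc i j p h]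
      refine Finset.sum_congr rfl fun l hl => Finset.sum_congr rfl fun k _ => ?_
      split_ifs with hc
      · rfl
      · push_neg at hc
        simp only [Finset.mem_range, Nat.lt_succ_iff] at hl
        by_cases h1 : 0 < l ∨ i < k
        · have h2' := hc h1
          have hlp : l = p := le_antisymm hl h2'.1
          have : c k j (p - l) = 0 := by
            apply hzero
            push_neg
            exact ⟨by omega, h2'.2⟩
          rw [this, zero_mul]
        · have : c i k l = 0 := hzero _ _ _ h1
          rw [this, mul_zero]
    · push_neg at h
      obtain ⟨hp, hij⟩ := h
      have hp0 : p = 0 := by omega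
      subst hp0
      rw [hzero i j 0 (by push_neg; exact ⟨le_rfl, hij⟩), map_zero]
      rw [eq_comm]
      refine Finset.sum_eq_zero fun l hl => Finset.sum_eq_zero fun k _ => ?_
      simp only [Finset.mem_range, Nat.lt_succ_iff, Nat.le_zero] at hl
      subst hl
      by_cases h1 : 0 < (0:ℕ) ∨ i < k
      · have hik : i < k := by
          rcases h1 with h1 | h1
          · omega
          · exact h1
        have : c k j 0 = 0 := by
          apply hzero; push_neg
          exact ⟨le_rfl, not_lt.1 fun hkj => absurd (hik.trans hkj) (not_lt.2 hij)⟩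
        rw [this, zero_mul]
      · rw [hzero _ _ _ h1, mul_zero]
  -- D squared vanishes on chords
  have hddc : ∀ i j p, D (D (c i j p)) = 0 := by
    intro i j p
    rw [hdc' i j p, map_sum]
    simp only [map_sum, hleib, hdc', Finset.sum_mul, Finset.mul_sum]
    -- now goal is Σ_l Σ_k (Σ_m Σ_t A + Σ_m Σ_t B) = 0
    simp only [Finset.sum_add_distrib]
    have e1 : (∑ l ∈ Finset.range (p + 1), ∑ k : Fin n,
          ∑ m ∈ Finset.range (p - l + 1), ∑ t : Fin n,
            c t j (p - l - m) * c k t m * c i k l)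
        = ∑ x ∈ (Finset.range (p + 1)).sigma (fun l => Finset.range (p - l + 1)),
          ∑ k : Fin n, ∑ t : Fin n, c t j (p - x.1 - x.2) * c k t x.2 * c i k x.1 := by
      rw [Finset.sum_sigma]
      exact Finset.sum_congr rfl fun l _ => Finset.sum_comm
    have e2 : (∑ l ∈ Finset.range (p + 1), ∑ k : Fin n,
          ∑ m ∈ Finset.range (l + 1), ∑ t : Fin n,
            c k j (p - l) * (c t k (l - m) * c i t m))
        = ∑ y ∈ (Finset.range (p + 1)).sigma (fun l => Finset.range (l + 1)),
          ∑ k : Fin n, ∑ t : Fin n, c k j (p - y.1) * (c t k (y.1 - y.2) * c i t y.2) := by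
      rw [Finset.sum_sigma]
      exact Finset.sum_congr rfl fun l _ => Finset.sum_comm
    have key : (∑ x ∈ (Finset.range (p + 1)).sigma (fun l => Finset.range (p - l + 1)),
          ∑ k : Fin n, ∑ t : Fin n, c t j (p - x.1 - x.2) * c k t x.2 * c i k x.1)
        = ∑ y ∈ (Finset.range (p + 1)).sigma (fun l => Finset.range (l + 1)),
          ∑ k : Fin n, ∑ t : Fin n, c k j (p - y.1) * (c t k (y.1 - y.2) * c i t y.2) := by
      refine Finset.sum_nbij' (fun x => ⟨x.1 + x.2, x.1⟩) (fun y => ⟨y.2, y.1 - y.2⟩)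
        ?_ ?_ ?_ ?_ ?_
      · rintro ⟨l, m⟩ hx
        simp only [Finset.mem_sigma, Finset.mem_range, Nat.lt_succ_iff] at hx ⊢
        omega
      · rintro ⟨l, m⟩ hy
        simp only [Finset.mem_sigma, Finset.mem_range, Nat.lt_succ_iff] at hy ⊢
        omega
      · rintro ⟨l, m⟩ hx
        simp only [Finset.mem_sigma, Finset.mem_range, Nat.lt_succ_iff] at hx
        have hm : l + m - l = m := by omega
        simp [hm]
      · rintro ⟨l, m⟩ hy
        simp only [Finset.mem_sigma, Finset.mem_range, Nat.lt_succ_iff] at hy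
        have hm : m + (l - m) = l := by omega
        simp [hm]
      · rintro ⟨l, m⟩ hx
        simp only [Finset.mem_sigma, Finset.mem_range, Nat.lt_succ_iff] at hx
        rw [Finset.sum_comm]
        refine Finset.sum_congr rfl fun k _ => Finset.sum_congr rfl fun t _ => ?_
        have h1 : p - (l + m) = p - l - m := by omega
        have h3 : l + m - l = m := by omega
        rw [h1, h3, mul_assoc]
    calc (∑ l ∈ Finset.range (p + 1), ∑ k : Fin n,
          ∑ m ∈ Finset.range (p - l + 1), ∑ t : Fin n,
            c t j (p - l - m) * c k t m * c i k l)
        + (∑ l ∈ Finset.range (p + 1), ∑ k : Fin n,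
          ∑ m ∈ Finset.range (l + 1), ∑ t : Fin n,
            c k j (p - l) * (c t k (l - m) * c i t m))
        = (∑ y ∈ (Finset.range (p + 1)).sigma (fun l => Finset.range (l + 1)),
          ∑ k : Fin n, ∑ t : Fin n, c k j (p - y.1) * (c t k (y.1 - y.2) * c i t y.2))
        + (∑ y ∈ (Finset.range (p + 1)).sigma (fun l => Finset.range (l + 1)),
          ∑ k : Fin n, ∑ t : Fin n, c k j (p - y.1) * (c t k (y.1 - y.2) * c i t y.2)) := by
          rw [e1, e2, key]
      _ = 0 := h2 _
  -- D 1 = 0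
  have hd1 : D 1 = 0 := by
    have h0 := hleib 1 1
    rw [mul_one, mul_one, one_mul] at h0
    nth_rw 1 [← add_zero (D 1)] at h0
    exact (add_left_cancel h0).symm
  have hdr : ∀ r : ZMod 2, D (algebraMap (ZMod 2) A r) = 0 := by
    intro r
    rw [Algebra.algebraMap_eq_smul_one, map_smul, hd1, smul_zero]
  -- finish by induction
  ext x
  have hx : x ∈ Algebra.adjoin (ZMod 2)
      (Set.range e ∪ {x : A | ∃ i j p, x = c i j p}) := by
    rw [hgenerate]; trivial
  simp only [LinearMap.comp_apply, LinearMap.zero_apply]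
  induction hx using Algebra.adjoin_induction with
  | mem y hy =>
    rcases hy with ⟨i, rfl⟩ | ⟨i, j, p, rfl⟩
    · rw [hde, map_zero]
    · exact hddc i j p
  | algebraMap r => rw [hdr, map_zero]
  | add y z _ _ hy hz => rw [map_add, map_add, hy, hz, add_zero]
  | mul y z _ _ hy hz =>
    rw [hleib, map_add, hleib, hleib, hy, hz, zero_mul, mul_zero, add_zero, zero_add]
    exact h2 _
end

section
/- With the setup of the circle algebra (CE^*(∂Λ;V), ∂_0) over F_2 with n marked points: call a chord short if it is not the concatenation of two other chords (equivalently, it goes from a marked point to the next marked point counterclockwise), and call a word of chords unconcatable if no two adjacent chords in the word have matching endpoint and starting point. Then the residue classes of unconcatable words of short chords form a basis of the homology H^*(CE, ∂_0). -/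
set_option synthInstance.maxHeartbeats 1000000
set_option maxSynthPendingDepth 3

namespace Stmt10

/-- The chord quiver: vertices are the `n` marked points on the circle, and an arrow
`i ⟶ j` is a chord `c_{ij}^p` (a counterclockwise arc from `i` to `j` passing `p` times
through the base point), which exists iff `p ≥ 1` or `i < j`. -/
scoped instance chordQuiver (n : ℕ) : Quiver (Fin n) :=
  ⟨fun i j => {p : ℕ // 0 < p ∨ i < j}⟩

/-- The sum (over `F₂`) of all two-letter words obtained by splitting the chord `f` into
two chords at an intermediate marked point. -/
noncomputable def splitD {n : ℕ} {i j : Fin n} (f : i ⟶ j) :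
    (Quiver.Path i j) →₀ ZMod 2 :=
  ∑ l ∈ Finset.range (f.val + 1), ∑ kk : Fin n,
    if h : (0 < l ∨ i < kk) ∧ (l < f.val ∨ kk < j) then
      Finsupp.single
        ((Quiver.Path.nil.cons (⟨l, h.1⟩ : i ⟶ kk)).cons
          (⟨f.val - l, h.2.imp (fun hl => Nat.sub_pos_of_lt hl) id⟩ : kk ⟶ j)) 1
    else 0

/-- The differential `∂₀` of a word of chords over `F₂`: split one letter at a time. -/
noncomputable def pathD {n : ℕ} {i : Fin n} :
    ∀ {j : Fin n}, Quiver.Path i j → (Quiver.Path i j →₀ ZMod 2)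
  | _, Quiver.Path.nil => 0
  | _, Quiver.Path.cons q f =>
      Finsupp.mapDomain (fun r => r.cons f) (pathD q) +
      Finsupp.mapDomain (fun s => q.comp s) (splitD f)

/-- The differential `∂₀` on the whole path algebra `CE^*(∂Λ; V)` over `F₂`, viewed as the
free module on the set of all words (paths) of chords. -/
noncomputable def bigD (n : ℕ) :
    ((Σ i : Fin n, Σ j : Fin n, Quiver.Path i j) →₀ ZMod 2) →ₗ[ZMod 2]
      ((Σ i : Fin n, Σ j : Fin n, Quiver.Path i j) →₀ ZMod 2) :=
  Finsupp.lsum (ZMod 2) fun w =>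
    LinearMap.toSpanSingleton (ZMod 2) _
      (Finsupp.mapDomain
        (fun p => (⟨w.1, w.2.1, p⟩ : Σ i : Fin n, Σ j : Fin n, Quiver.Path i j))
        (pathD w.2.2))

/-- A chord is short if it is not the concatenation of two other chords. -/
def IsShort {n : ℕ} {i j : Fin n} (f : i ⟶ j) : Prop := splitD f = 0

/-- All letters of the word are short chords. -/
def AllShort {n : ℕ} {i : Fin n} : ∀ {j : Fin n}, Quiver.Path i j → Prop
  | _, Quiver.Path.nil => True
  | _, Quiver.Path.cons q f => IsShort f ∧ AllShort q

/-- A word is unconcatable if no two adjacent chords in it have matching endpoint and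
starting point.  In this path algebra adjacent chords always match, so this means the
word has at most one letter. -/
def Unconcatable {n : ℕ} {i j : Fin n} (p : Quiver.Path i j) : Prop := p.length ≤ 1

/-- The homology classes of the unconcatable words of short chords. -/
noncomputable def classOf (n : ℕ)
    (w : {w : Σ i : Fin n, Σ j : Fin n, Quiver.Path i j //
          Unconcatable w.2.2 ∧ AllShort w.2.2})
    (hmem : Finsupp.single (w.val) (1 : ZMod 2) ∈ LinearMap.ker (bigD n)) :
    (LinearMap.ker (bigD n)) ⧸
      ((LinearMap.range (bigD n)).comap (LinearMap.ker (bigD n)).subtype) :=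
  Submodule.Quotient.mk ⟨Finsupp.single (w.val) 1, hmem⟩

/-!
Measure a chord by its length, the number of steps from one marked point to the next that it
spans. A chord is short iff its length is 1, and `∂₀` splits a chord of length `L` in the `L - 1`
ways `L = d + (L - d)`. Merging a short last letter into the letter before it is then a
contracting homotopy, `∂₀ h + h ∂₀ = id - π` with `π` the projection onto the span of the
unconcatable words of short chords (the acyclicity of all concatenation classes with `k > 0`
at once). These words are cycles and `π` kills boundaries, which only involve words of at least
two letters, so their classes form a basis of the homology.
-/

section Retract

open Submodule LinearMap

variable {R V ι : Type*} [Ring R] [AddCommGroup V] [Module R V]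
  {d π : V →ₗ[R] V} {b : ι → V}

theorem span_cycles_eq_comap (hbd : ∀ i, b i ∈ ker d) :
    span R (Set.range fun i => (⟨b i, hbd i⟩ : ker d)) =
      (span R (Set.range b)).comap (ker d).subtype := by
  rw [← comap_map_eq_of_injective (ker d).injective_subtype (span R _), Submodule.map_span,
    ← Set.range_comp]
  rfl

theorem linearIndependent_homologyClass (hb : LinearIndependent R b) (hbd : ∀ i, b i ∈ ker d)
    (hπb : ∀ i, π (b i) = b i) (hπd : π ∘ₗ d = 0) :
    LinearIndependent R fun i =>
      Submodule.Quotient.mk (p := (range d).comap (ker d).subtype) (⟨b i, hbd i⟩ : ker d) := by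
  have hcycles : LinearIndependent R fun i => (⟨b i, hbd i⟩ : ker d) :=
    LinearIndependent.of_comp (ker d).subtype hb
  refine hcycles.map (f := mkQ _) ?_
  rw [ker_mkQ, span_cycles_eq_comap hbd, disjoint_def]
  rintro x hxb ⟨y, hy⟩
  have hfix : span R (Set.range b) ≤ ker (π - LinearMap.id) :=
    span_le.2 (Set.range_subset_iff.2 fun i => by simp [hπb i])
  have hx : π x = x := sub_eq_zero.1 (hfix hxb)
  ext
  rw [← hx, ← Submodule.subtype_apply, ← hy, ← LinearMap.comp_apply, hπd, LinearMap.zero_apply]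
  rfl

theorem span_homologyClass_eq_top (hbd : ∀ i, b i ∈ ker d)
    (hπ : range π ≤ span R (Set.range b))
    (hcycle : ∀ z, d z = 0 → z - π z ∈ range d) :
    span R (Set.range fun i =>
      Submodule.Quotient.mk (p := (range d).comap (ker d).subtype) (⟨b i, hbd i⟩ : ker d)) = ⊤ := by
  have hbK : span R (Set.range b) ≤ ker d := span_le.2 (Set.range_subset_iff.2 hbd)
  rw [eq_top_iff]
  rintro c -
  obtain ⟨z, rfl⟩ := Submodule.Quotient.mk_surjective _ c
  have hπz : π z ∈ span R (Set.range b) := hπ (mem_range_self π z)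
  have hz : Submodule.Quotient.mk (p := (range d).comap (ker d).subtype) z =
      Submodule.Quotient.mk ⟨π z, hbK hπz⟩ :=
    (Submodule.Quotient.eq _).2 (hcycle z z.2)
  have hmem : (⟨π z, hbK hπz⟩ : ker d) ∈ span R (Set.range fun i => (⟨b i, hbd i⟩ : ker d)) := by
    rw [span_cycles_eq_comap hbd]
    exact hπz
  have := mem_map_of_mem (f := ((range d).comap (ker d).subtype).mkQ) hmem
  rwa [Submodule.map_span, ← Set.range_comp, mkQ_apply, ← hz] at this

end Retract

open Finsupp

variable {n : ℕ}

section Chords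

variable {i j : Fin n}

def arcLength (f : i ⟶ j) : ℕ := f.val * n + j.val - i.val

lemma val_lt_mul_add (f : i ⟶ j) : i.val < f.val * n + j.val := by
  rcases f.2 with h | h
  · nlinarith [i.isLt]
  · exact Nat.lt_add_left _ h

lemma add_arcLength (f : i ⟶ j) : i.val + arcLength f = f.val * n + j.val := by
  have := val_lt_mul_add f
  unfold arcLength
  omega

lemma arcLength_pos (f : i ⟶ j) : 0 < arcLength f := by
  have := add_arcLength f
  have := val_lt_mul_add f
  omega

lemma chord_ext {f g : i ⟶ j} (h : arcLength f = arcLength g) : f = g := by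
  have hf := add_arcLength f
  have hg := add_arcLength g
  exact Subtype.ext (Nat.eq_of_mul_eq_mul_right i.pos (by omega))

def arcEnd (i : Fin n) (d : ℕ) : Fin n := ⟨(i.val + d) % n, Nat.mod_lt _ i.pos⟩

def arcWinding (i : Fin n) (d : ℕ) : ℕ := (i.val + d) / n

lemma arcWinding_mul_add_arcEnd (i : Fin n) (d : ℕ) :
    arcWinding i d * n + (arcEnd i d).val = i.val + d :=
  Nat.div_add_mod' _ _

lemma arcWinding_eq_and_arcEnd_eq {i k : Fin n} {d l : ℕ} (h : i.val + d = l * n + k.val) :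
    arcWinding i d = l ∧ arcEnd i d = k := by
  constructor
  · rw [arcWinding, h, add_comm, Nat.add_mul_div_right _ _ i.pos, Nat.div_eq_of_lt k.isLt,
      zero_add]
  · ext
    rw [arcEnd, Fin.val_mk, h, add_comm, Nat.add_mul_mod_self_right, Nat.mod_eq_of_lt k.isLt]

lemma arcWinding_le (f : i ⟶ j) {d : ℕ} (hd : d < arcLength f) :
    arcWinding i d ≤ f.val := by
  have h := arcWinding_mul_add_arcEnd i d
  have := add_arcLength f
  by_contra! hlt
  nlinarith [j.isLt, Nat.mul_le_mul_right n (Nat.succ_le_of_lt hlt)]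

def initialChord (i : Fin n) {d : ℕ} (hd : 0 < d) : i ⟶ arcEnd i d :=
  ⟨arcWinding i d, by
    have := arcWinding_mul_add_arcEnd i d
    rcases Nat.eq_zero_or_pos (arcWinding i d) with h | h
    · exact Or.inr (Fin.lt_def.2 (by simp [h] at this; omega))
    · exact Or.inl h⟩

def finalChord (f : i ⟶ j) {d : ℕ} (hd : d < arcLength f) : arcEnd i d ⟶ j :=
  ⟨f.val - arcWinding i d, by
    rcases (arcWinding_le f hd).lt_or_eq with h | h
    · exact Or.inl (by omega)
    · have := arcWinding_mul_add_arcEnd i d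
      have := add_arcLength f
      exact Or.inr (Fin.lt_def.2 (by rw [h] at *; omega))⟩

lemma arcLength_initialChord (i : Fin n) {d : ℕ} (hd : 0 < d) :
    arcLength (initialChord i hd) = d := by
  have := arcWinding_mul_add_arcEnd i d
  simp only [arcLength, initialChord]
  omega

lemma arcLength_finalChord (f : i ⟶ j) {d : ℕ} (hd : d < arcLength f) :
    arcLength (finalChord f hd) = arcLength f - d := by
  have h := arcWinding_mul_add_arcEnd i d
  have := add_arcLength f
  have := Nat.mul_le_mul_right n (arcWinding_le f hd)
  simp only [arcLength, finalChord, Nat.sub_mul]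
  omega

def concat {a b c : Fin n} (e : a ⟶ b) (f : b ⟶ c) : a ⟶ c :=
  ⟨e.val + f.val, by
    rcases e.2 with h | h
    · exact Or.inl (by omega)
    · exact f.2.imp (by omega) h.trans⟩

lemma arcLength_concat {a b c : Fin n} (e : a ⟶ b) (f : b ⟶ c) :
    arcLength (concat e f) = arcLength e + arcLength f := by
  have := add_arcLength e
  have := add_arcLength f
  have := add_arcLength (concat e f)
  simp only [concat, Nat.add_mul] at *
  omega

end Chords

section Splitting

variable {i j : Fin n}

def splitAt (f : i ⟶ j) {d : ℕ} (h0 : 0 < d) (hd : d < arcLength f) : Quiver.Path i j :=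
  (Quiver.Path.nil.cons (initialChord i h0)).cons (finalChord f hd)

noncomputable def splitTerm (f : i ⟶ j) (d : ℕ) : Quiver.Path i j →₀ ZMod 2 :=
  if h : 0 < d ∧ d < arcLength f then single (splitAt f h.1 h.2) 1 else 0

lemma splitPoint_cond_iff (f : i ⟶ j) {l : ℕ} {k : Fin n} (hl : l ≤ f.val) :
    ((0 < l ∨ i < k) ∧ (l < f.val ∨ k < j)) ↔
      i.val < l * n + k.val ∧ l * n + k.val < f.val * n + j.val := by
  show (0 < l ∨ i.val < k.val) ∧ (l < f.val ∨ k.val < j.val) ↔ _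
  have hk := k.isLt
  have hj := j.isLt
  refine ⟨fun ⟨h1, h2⟩ => ⟨?_, ?_⟩, fun ⟨h1, h2⟩ => ⟨?_, ?_⟩⟩
  · rcases h1 with h | h
    · nlinarith [i.isLt]
    · exact Nat.lt_add_left _ h
  · rcases h2 with h | h
    · nlinarith
    · nlinarith [Nat.mul_le_mul_right n hl]
  · rcases Nat.eq_zero_or_pos l with h | h
    · subst h; simpa using h1
    · exact Or.inl h
  · rcases hl.lt_or_eq with h | h
    · exact Or.inl h
    · subst h; exact Or.inr (by omega)

lemma splitPoint_spec (f : i ⟶ j) {l : ℕ} {k : Fin n} (hl : l ≤ f.val)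
    (hc : (0 < l ∨ i < k) ∧ (l < f.val ∨ k < j)) :
    (0 < l * n + k.val - i.val ∧ l * n + k.val - i.val < arcLength f) ∧
      arcWinding i (l * n + k.val - i.val) = l ∧ arcEnd i (l * n + k.val - i.val) = k := by
  have := (splitPoint_cond_iff f hl).1 hc
  have := add_arcLength f
  exact ⟨by omega, arcWinding_eq_and_arcEnd_eq (by omega)⟩

lemma splitAt_eq {f : i ⟶ j} {d l : ℕ} {k : Fin n} (h0 : 0 < d) (hd : d < arcLength f)
    (hl : arcWinding i d = l) (hk : arcEnd i d = k)
    (p1 : 0 < l ∨ i < k) (p2 : 0 < f.val - l ∨ k < j) :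
    splitAt f h0 hd = (Quiver.Path.nil.cons (⟨l, p1⟩ : i ⟶ k)).cons (⟨f.val - l, p2⟩ : k ⟶ j) := by
  subst hl hk
  rfl

/- The splitting points `(l, k)` of `splitD` (winding number and marked point of the cut) are
reindexed by their distance `d = l * n + k - i` from the start of the chord. -/
theorem splitD_eq_sum (f : i ⟶ j) :
    splitD f = ∑ d ∈ Finset.Ioo 0 (arcLength f), splitTerm f d := by
  unfold splitD
  rw [← Finset.sum_product', ← Finset.sum_filter_of_ne
    (p := fun x : ℕ × Fin n => (0 < x.1 ∨ i < x.2) ∧ (x.1 < f.val ∨ x.2 < j))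
    fun x _ hne => by_contra fun hc => hne (dif_neg hc)]
  refine Finset.sum_nbij' (fun x => x.1 * n + x.2.val - i.val)
    (fun d => (arcWinding i d, arcEnd i d)) ?_ ?_ ?_ ?_ ?_ <;>
  simp only [Finset.mem_filter, Finset.mem_product, Finset.mem_range, Finset.mem_univ, and_true,
    Finset.mem_Ioo, Nat.lt_succ_iff]
  · rintro ⟨l, k⟩ ⟨hl, hc⟩
    exact (splitPoint_spec f hl hc).1
  · intro d hd
    have hw := arcWinding_le f hd.2
    refine ⟨hw, (splitPoint_cond_iff f hw).2 ?_⟩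
    have := arcWinding_mul_add_arcEnd i d
    have := add_arcLength f
    omega
  · rintro ⟨l, k⟩ ⟨hl, hc⟩
    obtain ⟨-, hw, he⟩ := splitPoint_spec f hl hc
    rw [hw, he]
  · intro d _
    have := arcWinding_mul_add_arcEnd i d
    omega
  · rintro ⟨l, k⟩ ⟨hl, hc⟩
    obtain ⟨hd, hw, he⟩ := splitPoint_spec f hl hc
    rw [dif_pos hc, splitTerm, dif_pos hd, splitAt_eq hd.1 hd.2 hw he hc.1]

end Splitting

lemma add_add_add_eq_of_charTwo {M : Type*} [AddCommGroup M] [Module (ZMod 2) M] (x y z : M) :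
    x + (y + z) + (x + z) = y := by
  rw [add_add_add_comm, ZModModule.add_self, zero_add, add_assoc, ZModModule.add_self, add_zero]

lemma linearCombination_single_one_eq_lmapDomain {R α β : Type*} [Semiring R] (h : α → β) :
    linearCombination R (fun a => single (h a) (1 : R)) = lmapDomain R R h := by
  ext
  simp

section Contraction

def mergeLast {i : Fin n} : ∀ {k j : Fin n}, Quiver.Path i k → (k ⟶ j) → Quiver.Path i j
  | _, _, .nil, f => Quiver.Path.nil.cons f
  | _, _, .cons q e, f => q.cons (concat e f)

/- On a single short chord this is the chord itself rather than `0`; either choice gives a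
contracting homotopy, as a short chord is a cycle. -/
noncomputable def mergeShortLast {i : Fin n} :
    ∀ {j : Fin n}, Quiver.Path i j → (Quiver.Path i j →₀ ZMod 2)
  | _, .nil => 0
  | _, .cons r f => if arcLength f = 1 then single (mergeLast r f) 1 else 0

open scoped Classical in
noncomputable def projShort {i j : Fin n} (p : Quiver.Path i j) : Quiver.Path i j →₀ ZMod 2 :=
  if Unconcatable p ∧ AllShort p then single p 1 else 0

variable {a i j : Fin n}

lemma concat_initialChord_finalChord (f : i ⟶ j) {d : ℕ} (h0 : 0 < d) (hd : d < arcLength f) :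
    concat (initialChord i h0) (finalChord f hd) = f :=
  chord_ext (by rw [arcLength_concat, arcLength_initialChord, arcLength_finalChord]; omega)

theorem linearCombination_mergeShortLast_comp_splitD (q : Quiver.Path a i) (f : i ⟶ j) :
    linearCombination (ZMod 2) mergeShortLast (mapDomain q.comp (splitD f)) =
      if 2 ≤ arcLength f then single (q.cons f) 1 else 0 := by
  have hterm : ∀ d ∈ Finset.Ioo 0 (arcLength f),
      linearCombination (ZMod 2) (mergeShortLast ∘ q.comp) (splitTerm f d) =
        if arcLength f - 1 = d then single (q.cons f) 1 else 0 := by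
    intro d hd
    rw [Finset.mem_Ioo] at hd
    rw [splitTerm, dif_pos hd, linearCombination_single, one_smul, Function.comp_apply]
    simp only [splitAt, Quiver.Path.comp_cons, Quiver.Path.comp_nil, mergeShortLast, mergeLast,
      arcLength_finalChord, concat_initialChord_finalChord]
    exact if_congr (by omega) rfl rfl
  rw [linearCombination_mapDomain, splitD_eq_sum, map_sum, Finset.sum_congr rfl hterm,
    Finset.sum_ite_eq]
  have := arcLength_pos f
  exact if_congr (by rw [Finset.mem_Ioo]; omega) rfl rfl

lemma isShort_iff (f : i ⟶ j) : IsShort f ↔ arcLength f = 1 := by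
  have hpos := arcLength_pos f
  refine ⟨fun h => ?_, fun h => ?_⟩
  · have h2 := linearCombination_mergeShortLast_comp_splitD (Quiver.Path.nil : Quiver.Path i i) f
    rw [show splitD f = 0 from h, mapDomain_zero, map_zero] at h2
    by_contra hne
    rw [if_pos (by omega)] at h2
    exact single_ne_zero.2 one_ne_zero h2.symm
  · rw [IsShort, splitD_eq_sum, h]
    rfl

lemma twoLetter_eq {k k' : Fin n} (e : a ⟶ k) (f : k ⟶ j) (e' : a ⟶ k') (f' : k' ⟶ j)
    (hk : k = k') (he : arcLength e = arcLength e') (hf : arcLength f = arcLength f') :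
    (Quiver.Path.nil.cons e).cons f = (Quiver.Path.nil.cons e').cons f' := by
  subst hk
  rw [chord_ext he, chord_ext hf]

lemma splitD_concat_of_short (e : a ⟶ i) {f : i ⟶ j} (hf : arcLength f = 1) :
    splitD (concat e f) =
      single ((Quiver.Path.nil.cons e).cons f) 1 + mapDomain (mergeLast · f) (splitD e) := by
  have hpos := arcLength_pos e
  rw [splitD_eq_sum, splitD_eq_sum, arcLength_concat, hf, Finset.Ioo_add_one_right_eq_Ioc,
    ← Finset.Ioo_insert_right hpos, Finset.sum_insert Finset.right_notMem_Ioo, mapDomain_finsetSum]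
  congr 1
  · have hd : 0 < arcLength e ∧ arcLength e < arcLength (concat e f) := by
      rw [arcLength_concat]; omega
    rw [splitTerm, dif_pos hd]
    congr 1
    exact twoLetter_eq _ _ _ _ (arcWinding_eq_and_arcEnd_eq (add_arcLength e)).2
      (arcLength_initialChord a hd.1)
      (by rw [arcLength_finalChord, arcLength_concat]; omega)
  · refine Finset.sum_congr rfl fun d hd => ?_
    rw [Finset.mem_Ioo] at hd
    have hd' : 0 < d ∧ d < arcLength (concat e f) := by rw [arcLength_concat]; omega
    rw [splitTerm, splitTerm, dif_pos hd, dif_pos hd', mapDomain_single]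
    simp only [splitAt, mergeLast]
    congr 2
    exact chord_ext (by simp only [arcLength_finalChord, arcLength_concat]; omega)

lemma pathD_cons {k : Fin n} (q : Quiver.Path i k) (f : k ⟶ j) :
    pathD (q.cons f) = mapDomain (·.cons f) (pathD q) + mapDomain q.comp (splitD f) :=
  rfl

lemma length_eq_two_of_mem_support_splitD (f : i ⟶ j) {s : Quiver.Path i j}
    (hs : s ∈ (splitD f).support) : s.length = 2 := by
  classical
  rw [splitD_eq_sum] at hs
  obtain ⟨d, -, hsd⟩ := Finset.mem_biUnion.1 (support_finsetSum hs)
  unfold splitTerm at hsd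
  split_ifs at hsd
  · rw [Finset.mem_singleton.1 (support_single_subset hsd)]
    rfl
  · simp at hsd

lemma projShort_cons_cons (q : Quiver.Path i a) {k : Fin n} (e : a ⟶ k) (f : k ⟶ j) :
    projShort ((q.cons e).cons f) = 0 :=
  if_neg fun h => by simpa [Unconcatable] using h.1

lemma pathD_mergeLast_of_short {k : Fin n} (r : Quiver.Path i k) {f : k ⟶ j}
    (hf : arcLength f = 1) :
    pathD (mergeLast r f) + mapDomain (mergeLast · f) (pathD r) =
      single (r.cons f) 1 + projShort (r.cons f) := by
  cases r with
  | nil =>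
    have hshort : splitD f = 0 := (isShort_iff f).2 hf
    have hproj : projShort (Quiver.Path.nil.cons f) = single (Quiver.Path.nil.cons f) 1 :=
      if_pos ⟨by simp [Unconcatable], hshort, trivial⟩
    simp [mergeLast, pathD, hshort, hproj, ZModModule.add_self]
  | cons q e =>
    have hcomm : mapDomain q.comp (mapDomain (mergeLast · f) (splitD e)) =
        mapDomain (mergeLast · f) (mapDomain q.comp (splitD e)) := by
      rw [← mapDomain_comp, ← mapDomain_comp]
      refine mapDomain_congr fun s hs => ?_
      have := length_eq_two_of_mem_support_splitD e hs
      cases s with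
      | nil => simp at this
      | cons s' e' => rfl
    rw [mergeLast, pathD_cons, splitD_concat_of_short e hf, pathD_cons, mapDomain_add,
      mapDomain_add, mapDomain_single, hcomm, ← mapDomain_comp, ← mapDomain_comp,
      projShort_cons_cons, add_zero]
    exact add_add_add_eq_of_charTwo _ _ _

theorem pathD_mergeShortLast_add (p : Quiver.Path i j) :
    linearCombination (ZMod 2) pathD (mergeShortLast p) +
      linearCombination (ZMod 2) mergeShortLast (pathD p) = single p 1 + projShort p := by
  cases p with
  | nil =>
    have hproj : projShort (Quiver.Path.nil : Quiver.Path i i) = single .nil 1 :=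
      if_pos ⟨by simp [Unconcatable], trivial⟩
    simp [mergeShortLast, pathD, hproj, ZModModule.add_self]
  | cons r f =>
    rw [pathD_cons, map_add, linearCombination_mergeShortLast_comp_splitD,
      linearCombination_mapDomain]
    by_cases hf : arcLength f = 1
    · have hcomp : (mergeShortLast ∘ fun r : Quiver.Path i _ => r.cons f) =
          fun r => single (mergeLast r f) (1 : ZMod 2) :=
        funext fun _ => if_pos hf
      rw [mergeShortLast, if_pos hf, linearCombination_single, one_smul, hcomp,
        linearCombination_single_one_eq_lmapDomain, lmapDomain_apply, if_neg (by omega), add_zero]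
      exact pathD_mergeLast_of_short r hf
    · have hcomp : (mergeShortLast ∘ fun r : Quiver.Path i _ => r.cons f) =
          fun _ => (0 : Quiver.Path i j →₀ ZMod 2) :=
        funext fun _ => if_neg hf
      have hproj : projShort (r.cons f) = 0 := if_neg fun h => hf ((isShort_iff f).1 h.2.1)
      have := arcLength_pos f
      rw [mergeShortLast, if_neg hf, hcomp, if_pos (by omega), hproj]
      simp [linearCombination_apply]

lemma pathD_eq_zero_of_short {p : Quiver.Path i j} (hp : Unconcatable p ∧ AllShort p) :
    pathD p = 0 := by
  cases p with
  | nil => rfl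
  | cons r f =>
    cases r with
    | nil => simp [pathD, show splitD f = 0 from hp.2.1]
    | cons => simp [Unconcatable] at hp

lemma two_le_length_of_mem_support_pathD {p : Quiver.Path i j} {s : Quiver.Path i j}
    (hs : s ∈ (pathD p).support) : 2 ≤ s.length := by
  classical
  induction p with
  | nil => simp [pathD] at hs
  | cons q f ih =>
    rw [pathD_cons] at hs
    rcases Finset.mem_union.1 (support_add hs) with h | h
    · obtain ⟨t, ht, rfl⟩ := Finset.mem_image.1 (mapDomain_support h)
      have := ih ht
      rw [Quiver.Path.length_cons]
      omega
    · obtain ⟨t, ht, rfl⟩ := Finset.mem_image.1 (mapDomain_support h)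
      rw [Quiver.Path.length_comp, length_eq_two_of_mem_support_splitD f ht]
      omega

lemma linearCombination_projShort_pathD (p : Quiver.Path i j) :
    linearCombination (ZMod 2) projShort (pathD p) = 0 := by
  rw [linearCombination_apply]
  refine Finset.sum_eq_zero fun s hs => ?_
  have := two_le_length_of_mem_support_pathD hs
  have hproj : projShort s = 0 := if_neg fun h => by simp only [Unconcatable] at h; omega
  simp only [hproj, smul_zero]

end Contraction

section Words

abbrev Word (n : ℕ) := Σ i : Fin n, Σ j : Fin n, Quiver.Path i j

abbrev ShortWord (n : ℕ) := {w : Word n // Unconcatable w.2.2 ∧ AllShort w.2.2}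

noncomputable def liftWordOp
    (g : ∀ {i j : Fin n}, Quiver.Path i j → (Quiver.Path i j →₀ ZMod 2)) :
    (Word n →₀ ZMod 2) →ₗ[ZMod 2] (Word n →₀ ZMod 2) :=
  linearCombination (ZMod 2) fun w => mapDomain (fun p => (⟨w.1, w.2.1, p⟩ : Word n)) (g w.2.2)

variable (g : ∀ {i j : Fin n}, Quiver.Path i j → (Quiver.Path i j →₀ ZMod 2))

lemma bigD_eq_liftWordOp : bigD n = liftWordOp pathD := by
  ext
  simp [bigD, liftWordOp]

lemma liftWordOp_single (w : Word n) :
    liftWordOp g (single w 1) = mapDomain (fun p => (⟨w.1, w.2.1, p⟩ : Word n)) (g w.2.2) := by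
  rw [liftWordOp, linearCombination_single, one_smul]

lemma liftWordOp_mapDomain {i j : Fin n} (x : Quiver.Path i j →₀ ZMod 2) :
    liftWordOp g (mapDomain (fun p => (⟨i, j, p⟩ : Word n)) x) =
      mapDomain (fun p => (⟨i, j, p⟩ : Word n)) (linearCombination (ZMod 2) g x) := by
  rw [liftWordOp, linearCombination_mapDomain, ← lmapDomain_apply (ZMod 2) (ZMod 2),
    apply_linearCombination]
  rfl

end Words

theorem bigD_homotopy (x : Word n →₀ ZMod 2) :
    bigD n (liftWordOp mergeShortLast x) + liftWordOp mergeShortLast (bigD n x) =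
      x + liftWordOp projShort x := by
  have h : bigD n ∘ₗ liftWordOp mergeShortLast + liftWordOp mergeShortLast ∘ₗ bigD n =
      LinearMap.id + liftWordOp projShort := by
    ext ⟨i, j, p⟩ : 2
    simp only [LinearMap.add_apply, LinearMap.comp_apply, LinearMap.id_apply, lsingle_apply,
      bigD_eq_liftWordOp, liftWordOp_single, liftWordOp_mapDomain]
    rw [← mapDomain_add, pathD_mergeShortLast_add, mapDomain_add, mapDomain_single]
  exact LinearMap.congr_fun h x

theorem liftWordOp_projShort_comp_bigD : liftWordOp projShort ∘ₗ bigD n = 0 := by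
  ext w : 2
  simp [bigD_eq_liftWordOp, liftWordOp_single, liftWordOp_mapDomain,
    linearCombination_projShort_pathD]

lemma single_mem_ker_bigD (w : ShortWord n) :
    single w.val (1 : ZMod 2) ∈ LinearMap.ker (bigD n) := by
  rw [LinearMap.mem_ker, bigD_eq_liftWordOp, liftWordOp_single, pathD_eq_zero_of_short w.2,
    mapDomain_zero]

lemma liftWordOp_projShort_single (w : ShortWord n) :
    liftWordOp projShort (single w.val 1) = single w.val 1 := by
  rw [liftWordOp_single, show projShort w.val.2.2 = single w.val.2.2 1 from if_pos w.2,
    mapDomain_single]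

lemma range_liftWordOp_projShort_le :
    LinearMap.range (liftWordOp (n := n) projShort) ≤
      Submodule.span (ZMod 2) (Set.range fun w : ShortWord n => single w.val (1 : ZMod 2)) := by
  rw [liftWordOp, range_linearCombination, Submodule.span_le, Set.range_subset_iff]
  rintro ⟨i, j, p⟩
  by_cases hp : Unconcatable p ∧ AllShort p
  · rw [show projShort p = single p 1 from if_pos hp, mapDomain_single]
    exact Submodule.subset_span ⟨⟨⟨i, j, p⟩, hp⟩, rfl⟩
  · rw [show projShort p = 0 from if_neg hp, mapDomain_zero]
    exact Submodule.zero_mem _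

/-- the residue classes of the unconcatable words of short chords form a
basis of the homology `H^*(CE(∂Λ; V), ∂₀)`. -/
theorem stmt10 (n : ℕ) :
    ∃ hmem : ∀ w : {w : Σ i : Fin n, Σ j : Fin n, Quiver.Path i j //
          Unconcatable w.2.2 ∧ AllShort w.2.2},
        Finsupp.single (w.val) (1 : ZMod 2) ∈ LinearMap.ker (bigD n),
      LinearIndependent (ZMod 2) (fun w => classOf n w (hmem w)) ∧
      Submodule.span (ZMod 2) (Set.range (fun w => classOf n w (hmem w))) = ⊤ := by
  have hcycle : ∀ z, bigD n z = 0 → z - liftWordOp projShort z ∈ LinearMap.range (bigD n) :=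
    fun z hz => ⟨liftWordOp mergeShortLast z, by
      rw [ZModModule.sub_eq_add, ← bigD_homotopy, hz, map_zero, add_zero]⟩
  refine ⟨single_mem_ker_bigD, ?_, ?_⟩
  · exact linearIndependent_homologyClass
      ((linearIndependent_single_one (ZMod 2) (Word n)).comp _ Subtype.val_injective)
      single_mem_ker_bigD liftWordOp_projShort_single liftWordOp_projShort_comp_bigD
  · exact span_homologyClass_eq_top single_mem_ker_bigD range_liftWordOp_projShort_le hcycle

end Stmt10
end

section
/- Let Q be a quiver with vertices 1,…,n and arrows given by a crossing set: one arrow a_{ij}: i → j for each pair with σ(i⁻) < σ(j⁻) < σ(i⁺) < σ(j⁺), where σ is the handle permutation of order n with σ(i⁻) = 2i−2, σ(i⁺) = 2i+1 for 1 < i < n, σ(1⁻)=1, σ(1⁺)=3, σ(n⁻)=2n−2, σ(n⁺)=2n. Then Q is exactly the A_n-quiver: its arrows are precisely a_{i,i+1}: i → i+1 for 1 ≤ i ≤ n−1, and moreover there is no vertex k with arrows a_{ik} and a_{kj} both present and composable to a path from i to j of length 2 equal to a crossing pair contributing to a differential; hence the associated Chekanov–Eliashberg differential ∂(a_{ij})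 = Σ_k a_{kj}a_{ik} (sum over k with both crossing conditions) is identically zero. -/
/-- Position of the first occurrence `σ(i⁻)` of the letter `i` in the handle permutation
defining the Legendrian `Λ_{A'}^n`. -/
def pmA' (n i : ℕ) : ℕ := if i = 1 then 1 else 2 * i - 2

/-- Position of the second occurrence `σ(i⁺)` of the letter `i` in the handle permutation
defining the Legendrian `Λ_{A'}^n`. -/
def ppA' (n i : ℕ) : ℕ :=
  if i = 1 then 3 else if i = n then 2 * n else 2 * i + 1

/-- The crossing relation `σ(i⁻) < σ(j⁻) < σ(i⁺) < σ(j⁺)`. -/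
def CrossA' (n i j : ℕ) : Prop :=
  pmA' n i < pmA' n j ∧ pmA' n j < ppA' n i ∧ ppA' n i < ppA' n j

lemma crossA'_iff (n i j : ℕ) (hn : 2 ≤ n) (hi : 1 ≤ i) (hi' : i ≤ n)
    (hj : 1 ≤ j) (hj' : j ≤ n) : CrossA' n i j ↔ j = i + 1 := by
  unfold CrossA' pmA' ppA'
  split_ifs <;> omega

/-- for the handle permutation `σ` with `σ(1⁻)=1, σ(1⁺)=3`,
`σ(i⁻)=2i−2, σ(i⁺)=2i+1` for `1<i<n`, and `σ(n⁻)=2n−2, σ(n⁺)=2n`, the crossing quiver is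
exactly the `A_n`-quiver (arrows precisely `i → i+1`), and there is no vertex `k` with
composable crossings `i → k → j`; hence the Chekanov–Eliashberg differential
`∂(a_{ij}) = Σ_k a_{kj} a_{ik}` vanishes identically. -/
theorem stmt13 (n : ℕ) (hn : 2 ≤ n) :
    (∀ i j : ℕ, 1 ≤ i → i ≤ n → 1 ≤ j → j ≤ n → (CrossA' n i j ↔ j = i + 1)) ∧
    (∀ i j kk : ℕ, 1 ≤ i → i ≤ n → 1 ≤ j → j ≤ n → 1 ≤ kk → kk ≤ n →
      CrossA' n i j → CrossA' n i kk → CrossA' n kk j → False) := by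
  refine ⟨fun i j hi hi' hj hj' => crossA'_iff n i j hn hi hi' hj hj', ?_⟩
  intro i j kk hi hi' hj hj' hk hk' h1 h2 h3
  rw [crossA'_iff n i j hn hi hi' hj hj'] at h1
  rw [crossA'_iff n i kk hn hi hi' hk hk'] at h2
  rw [crossA'_iff n kk j hn hk hk' hj hj'] at h3
  omega
end

section
/- Over the field F_2, let A be the dg-algebra with idempotents e_1,…,e_k and generators a_{ij} for 1 ≤ i ≤ j ≤ k, with differential ∂(a_{ij}) = δ_{ij} e_i + Σ_{m>i} a_{mj} a_{im} (extended by the Leibniz rule). Then ∂² = 0, and moreover ∂(a_{kk}) = e_k while a_{kk} does not occur in ∂(a_{ij}) for any (i,j) ≠ (k,k); hence by the exact-removal lemma, the quotient of A by the ideal generated by all a_{ij} with i = k or j = k (and e_k) is quasi-isomorphic to A. -/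
/-!
In characteristic 2 the square of a Leibniz map is again a derivation, so `∂² = 0` only has to be
checked on the generators; there the two halves of `∂²(a_{ij})` are the same sum over triples
`i < m < n < j`, hence cancel.

For the removal, `K` is the top vertex, so every arrow touching `K` ends at `K` and the ideal is
the right ideal `e_K · A`. Left multiplication by `a_{KK}` is a contracting homotopy of it because
`∂(a_{KK}) = e_K`, so the ideal is acyclic and the quotient map is a quasi-isomorphism.
-/

namespace Stmt15

/-- The quiver with one vertex for each strand `Ω_1, …, Ω_k` (0-indexed) and one arrow
`i → j` for every `i ≤ j` (the Reeb chord `a_{ij}`). -/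
scoped instance triQuiver (k : ℕ) : Quiver (Fin k) := ⟨fun i j => PLift (i ≤ j)⟩

/-- The product in `A` of the idempotents/arrow-generators along a quiver path. -/
def pathProd {A : Type*} [Ring A] {V : Type*} [Quiver V] (e : V → A)
    (ar : ∀ {i j : V}, (i ⟶ j) → A) : ∀ {i j : V}, Quiver.Path i j → A
  | i, _, Quiver.Path.nil => e i
  | _, _, Quiver.Path.cons p f => ar f * pathProd e (fun {_ _} g => ar g) p

/-- The two-sided ideal of `A` (as an `F₂`-submodule) generated by a set `S`. -/
def twoSidedSpan {A : Type*} [Ring A] [Algebra (ZMod 2) A] (S : Set A) :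
    Submodule (ZMod 2) A :=
  Submodule.span (ZMod 2) {x | ∃ u v : A, ∃ s ∈ S, x = u * s * v}

/-- `f` is a chain map from `(M, dM)` to `(N, dN)` which induces an isomorphism
on homology (a quasi-isomorphism). -/
def IsQuasiIso {M N : Type*} [AddCommGroup M] [Module (ZMod 2) M]
    [AddCommGroup N] [Module (ZMod 2) N]
    (dM : M →ₗ[ZMod 2] M) (dN : N →ₗ[ZMod 2] N) (f : M →ₗ[ZMod 2] N) : Prop :=
  (∀ x, f (dM x) = dN (f x)) ∧
  (∀ y, dN y = 0 → ∃ x, dM x = 0 ∧ ∃ z, y - f x = dN z) ∧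
  (∀ x, dM x = 0 → (∃ z, f x = dN z) → ∃ w, x = dM w)

open Finset

section CharTwo

variable {A : Type*} [Ring A] [Algebra (ZMod 2) A]

theorem add_self_eq_zero_of_zmod_two (z : A) : z + z = 0 := by
  rw [← two_smul (ZMod 2) z, show (2 : ZMod 2) = 0 from rfl, zero_smul]

variable {D : A →ₗ[ZMod 2] A} (hleib : ∀ x y, D (x * y) = D x * y + x * D y)
include hleib

theorem map_map_mul_of_leibniz (x y : A) :
    D (D (x * y)) = D (D x) * y + x * D (D y) := by
  rw [hleib, map_add, hleib, hleib, add_assoc, ← add_assoc (D x * D y),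
    add_self_eq_zero_of_zmod_two, zero_add]

end CharTwo

section Paths

variable {A : Type*} [Ring A] {V : Type*} [Quiver V] (e : V → A)
  (ar : ∀ {i j : V}, (i ⟶ j) → A)

theorem pathProd_nil (i : V) : pathProd e ar (Quiver.Path.nil : Quiver.Path i i) = e i := by
  rw [pathProd]

theorem pathProd_cons {i j l : V} (p : Quiver.Path i j) (f : j ⟶ l) :
    pathProd e ar (p.cons f) = ar f * pathProd e ar p := by
  rw [pathProd]

theorem pathProd_mul_idempotent [DecidableEq V]
    (horth : ∀ i j, e i * e j = if i = j then e i else 0) {s t : V} (p : Quiver.Path s t) (v : V) :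
    pathProd e ar p * e v = if s = v then pathProd e ar p else 0 := by
  induction p with
  | nil => rw [pathProd_nil]; exact horth s v
  | cons p f ih =>
    rw [pathProd_cons, mul_assoc, ih]
    split_ifs <;> simp

theorem idempotent_mul_pathProd (hidem : ∀ i, e i * e i = e i)
    (hleft : ∀ {i j : V} (f : i ⟶ j), e j * ar f = ar f) {s t : V} (p : Quiver.Path s t) :
    e t * pathProd e ar p = pathProd e ar p := by
  induction p with
  | nil => rw [pathProd_nil]; exact hidem s
  | cons p f ih => rw [pathProd_cons, ← mul_assoc, hleft]

theorem map_map_pathProd_eq_zero [Algebra (ZMod 2) A] {D : A →ₗ[ZMod 2] A}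
    (hleib : ∀ x y, D (x * y) = D x * y + x * D y) (he : ∀ i, D (D (e i)) = 0)
    (har : ∀ {i j : V} (f : i ⟶ j), D (D (ar f)) = 0) {s t : V} (p : Quiver.Path s t) :
    D (D (pathProd e ar p)) = 0 := by
  induction p with
  | nil => rw [pathProd_nil]; exact he s
  | cons p f ih => rw [pathProd_cons, map_map_mul_of_leibniz hleib, har, ih, zero_mul, mul_zero,
      add_zero]

theorem idempotent_mul_mul_idempotent_of_basis [DecidableEq V] [Algebra (ZMod 2) A]
    (horth : ∀ i j, e i * e j = if i = j then e i else 0)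
    (hleft : ∀ {i j : V} (f : i ⟶ j), e j * ar f = ar f)
    (bb : Module.Basis (Σ i : V, Σ j : V, Quiver.Path i j) (ZMod 2) A)
    (hbb : ∀ (i j : V) (p : Quiver.Path i j), bb ⟨i, j, p⟩ = pathProd e ar p)
    (v : V) (hv : ∀ t, Quiver.Path v t → t = v) (x : A) :
    e v * x * e v = x * e v := by
  have hidem : ∀ i, e i * e i = e i := fun i => by simpa using horth i i
  suffices (LinearMap.mulLeft (ZMod 2) (e v)).comp (LinearMap.mulRight (ZMod 2) (e v))
      = LinearMap.mulRight (ZMod 2) (e v) by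
    simpa [mul_assoc] using LinearMap.congr_fun this x
  refine bb.ext fun ⟨s, t, p⟩ => ?_
  simp only [LinearMap.comp_apply, LinearMap.mulLeft_apply, LinearMap.mulRight_apply, hbb,
    pathProd_mul_idempotent e ar horth]
  split_ifs with hs
  · subst hs
    obtain rfl := hv t p
    exact idempotent_mul_pathProd e ar hidem hleft p
  · exact mul_zero _

end Paths

theorem le_of_path {k : ℕ} {i j : Fin k} (p : Quiver.Path i j) : i ≤ j := by
  induction p with
  | nil => exact le_rfl
  | cons _ f ih => exact ih.trans f.down

theorem sum_Ioo_sum_Ioo_comm {ι M : Type*} [LinearOrder ι] [LocallyFiniteOrder ι]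
    [AddCommMonoid M] (f : ι → ι → M) (i j : ι) :
    ∑ m ∈ Ioo i j, ∑ n ∈ Ioo i m, f n m = ∑ n ∈ Ioo i j, ∑ m ∈ Ioo n j, f n m := by
  refine sum_comm' fun m n => ?_
  simp only [mem_Ioo]
  constructor
  · rintro ⟨⟨him, hmj⟩, hin, hnm⟩
    exact ⟨⟨hnm, hmj⟩, hin, hnm.trans hmj⟩
  · rintro ⟨⟨hnm, hmj⟩, hin, -⟩
    exact ⟨⟨hin.trans hnm, hmj⟩, hin, hnm⟩

section Generators

variable {ι A : Type*} [LinearOrder ι] [LocallyFiniteOrder ι] [Ring A] [Algebra (ZMod 2) A]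
  (e : ι → A) (a : ι → ι → A) {D : A →ₗ[ZMod 2] A}

theorem map_map_generator_eq_zero (hleib : ∀ x y, D (x * y) = D x * y + x * D y)
    (hde : ∀ i, D (e i) = 0)
    (hdc : ∀ i j, i ≤ j → D (a i j) = (if i = j then e i else 0) + ∑ m ∈ Ioo i j, a m j * a i m)
    {i j : ι} (hij : i ≤ j) : D (D (a i j)) = 0 := by
  rcases hij.eq_or_lt with rfl | hij
  · simp [hdc, hde]
  have hdc' : ∀ {i j}, i < j → D (a i j) = ∑ m ∈ Ioo i j, a m j * a i m := fun h => by
    rw [hdc _ _ h.le, if_neg h.ne, zero_add]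
  have hterm : ∀ m ∈ Ioo i j, D (a m j * a i m)
      = ∑ n ∈ Ioo m j, a n j * (a m n * a i m) + ∑ n ∈ Ioo i m, a m j * (a n m * a i n) := by
    intro m hm
    obtain ⟨him, hmj⟩ := mem_Ioo.mp hm
    simp only [hleib, hdc' him, hdc' hmj, sum_mul, mul_sum, mul_assoc]
  rw [hdc' hij, map_sum, sum_congr rfl hterm, sum_add_distrib,
    sum_Ioo_sum_Ioo_comm (fun n m => a m j * (a n m * a i n))]
  exact add_self_eq_zero_of_zmod_two _

theorem map_generator_mem_adjoin
    (hdc : ∀ i j, i ≤ j → D (a i j) = (if i = j then e i else 0) + ∑ m ∈ Ioo i j, a m j * a i m)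
    (K : ι) {i j : ι} (hij : i ≤ j) :
    D (a i j) ∈ Algebra.adjoin (ZMod 2)
      ({x : A | ∃ i' j' : ι, ¬(i' = K ∧ j' = K) ∧ x = a i' j'} ∪ Set.range e) := by
  rw [hdc i j hij]
  refine Subalgebra.add_mem _ ?_ (Subalgebra.sum_mem _ fun m hm => ?_)
  · split_ifs
    · exact Algebra.subset_adjoin (Or.inr ⟨i, rfl⟩)
    · exact Subalgebra.zero_mem _
  · obtain ⟨him, hmj⟩ := mem_Ioo.mp hm
    exact Subalgebra.mul_mem _
      (Algebra.subset_adjoin (Or.inl ⟨m, j, fun h => hmj.ne (h.1.trans h.2.symm), rfl⟩))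
      (Algebra.subset_adjoin (Or.inl ⟨i, m, fun h => him.ne (h.1.trans h.2.symm), rfl⟩))

end Generators

section ExactRemoval

variable {A : Type*} [Ring A] [Algebra (ZMod 2) A]

theorem mem_twoSidedSpan_iff {ε : A} {S : Set A} (hεS : ε ∈ S) (hS : ∀ s ∈ S, ε * s = s)
    (hcorner : ∀ x, ε * x * ε = x * ε) (x : A) : x ∈ twoSidedSpan S ↔ ε * x = x := by
  refine ⟨fun hx => ?_, fun hx => Submodule.subset_span ⟨1, x, ε, hεS, by rw [one_mul, hx]⟩⟩
  suffices twoSidedSpan S ≤ LinearMap.ker (LinearMap.mulLeft (ZMod 2) ε - LinearMap.id) by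
    simpa [sub_eq_zero] using this hx
  refine Submodule.span_le.mpr ?_
  rintro _ ⟨u, v, s, hs, rfl⟩
  simp only [SetLike.mem_coe, LinearMap.mem_ker, LinearMap.sub_apply, LinearMap.mulLeft_apply,
    LinearMap.id_apply, sub_eq_zero]
  calc ε * (u * s * v) = ε * u * ε * s * v := by simp only [mul_assoc, hS s hs]
    _ = u * s * v := by rw [hcorner]; simp only [mul_assoc, hS s hs]

theorem isQuasiIso_mkQ_of_contraction {M : Type*} [AddCommGroup M] [Module (ZMod 2) M]
    {D : M →ₗ[ZMod 2] M} (hDD : ∀ x, D (D x) = 0) {I : Submodule (ZMod 2) M}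
    (hDI : I ≤ I.comap D) (h : M →ₗ[ZMod 2] M) (hhI : ∀ v ∈ I, h v ∈ I)
    (hh : ∀ v ∈ I, D (h v) + h (D v) = v) :
    IsQuasiIso D (I.mapQ I D hDI) I.mkQ := by
  have hcycle : ∀ v ∈ I, D v = 0 → D (h v) = v := fun v hv hDv => by
    simpa [hDv] using hh v hv
  refine ⟨fun x => rfl, fun y hy => ?_, fun x hx ⟨z, hz⟩ => ?_⟩
  · obtain ⟨x, rfl⟩ := I.mkQ_surjective y
    have hDx : D x ∈ I := (Submodule.Quotient.mk_eq_zero I).mp hy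
    refine ⟨x - h (D x), ?_, 0, ?_⟩
    · rw [map_sub, hcycle _ hDx (hDD x), sub_self]
    · rw [map_zero, ← map_sub, sub_sub_cancel]
      exact (Submodule.Quotient.mk_eq_zero I).mpr (hhI _ hDx)
  · obtain ⟨z, rfl⟩ := I.mkQ_surjective z
    have hv : x - D z ∈ I := (Submodule.Quotient.eq I).mp hz
    refine ⟨z + h (x - D z), ?_⟩
    rw [map_add, hcycle _ hv (by rw [map_sub, hx, hDD, sub_zero]), add_sub_cancel]

/-- The exact-removal lemma. -/
theorem exists_isQuasiIso_mkQ_of_map_eq {D : A →ₗ[ZMod 2] A}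
    (hleib : ∀ x y, D (x * y) = D x * y + x * D y) (hDD : ∀ x, D (D x) = 0)
    {ε c : A} (hDε : D ε = 0) (hDc : D c = ε) (hεc : ε * c = c) {I : Submodule (ZMod 2) A}
    (hI : ∀ x, x ∈ I ↔ ε * x = x) :
    ∃ hDI : I ≤ I.comap D, IsQuasiIso D (I.mapQ I D hDI) I.mkQ := by
  have hDI : I ≤ I.comap D := fun x hx => by
    have hx := (hI x).mp hx
    have hDx : D x = ε * D x := by
      conv_lhs => rw [← hx]
      rw [hleib, hDε, zero_mul, zero_add]
    exact (hI _).mpr hDx.symm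
  refine ⟨hDI, isQuasiIso_mkQ_of_contraction hDD hDI (LinearMap.mulLeft (ZMod 2) c)
    (fun v _ => (hI _).mpr ?_) (fun v hv => ?_)⟩
  · rw [LinearMap.mulLeft_apply, ← mul_assoc, hεc]
  · rw [LinearMap.mulLeft_apply, LinearMap.mulLeft_apply, hleib, hDc, (hI v).mp hv, add_assoc,
      add_self_eq_zero_of_zmod_two, add_zero]

end ExactRemoval

theorem stmt15_general (k : ℕ)
    (A : Type*) [Ring A] [Algebra (ZMod 2) A]
    (e : Fin k → A) (a : Fin k → Fin k → A)
    (ha0 : ∀ i j : Fin k, ¬ i ≤ j → a i j = 0)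
    (horth : ∀ i j, e i * e j = if i = j then e i else 0)
    (hcompat : ∀ i j : Fin k, i ≤ j → e j * a i j = a i j ∧ a i j * e i = a i j)
    (hfree : ∃ bb : Module.Basis (Σ i : Fin k, Σ j : Fin k, Quiver.Path i j) (ZMod 2) A,
      ∀ (i j : Fin k) (p : Quiver.Path i j),
        bb ⟨i, j, p⟩ = pathProd e (fun {i' j'} _ => a i' j') p)
    (D : A →ₗ[ZMod 2] A)
    (hleib : ∀ x y, D (x * y) = D x * y + x * D y)
    (hde : ∀ i, D (e i) = 0)
    (hdc : ∀ i j : Fin k, i ≤ j →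
      D (a i j) = (if i = j then e i else 0) + ∑ m ∈ Finset.Ioo i j, a m j * a i m)
    (K : Fin k) (hK : K.val = k - 1)
    (I : Submodule (ZMod 2) A)
    (hI : I = twoSidedSpan
      ({x : A | ∃ i' j' : Fin k, (i' = K ∨ j' = K) ∧ x = a i' j'} ∪ {e K})) :
    (D ∘ₗ D = 0) ∧
    (D (a K K) = e K) ∧
    (∀ i j : Fin k, i ≤ j → ¬(i = K ∧ j = K) →
      D (a i j) ∈ Algebra.adjoin (ZMod 2)
        ({x : A | ∃ i' j' : Fin k, ¬(i' = K ∧ j' = K) ∧ x = a i' j'} ∪ Set.range e)) ∧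
    (∃ hsub : I ≤ I.comap D, IsQuasiIso D (Submodule.mapQ I I D hsub) I.mkQ) := by
  obtain ⟨bb, hbb⟩ := hfree
  have hKmax : ∀ j : Fin k, j ≤ K := fun j => by
    rw [Fin.le_def, hK]
    exact Nat.le_sub_one_of_lt j.isLt
  have hDD : ∀ x, D (D x) = 0 := fun x => by
    refine LinearMap.congr_fun (bb.ext (f₁ := D ∘ₗ D) (f₂ := 0) fun ⟨i, j, p⟩ => ?_) x
    rw [LinearMap.comp_apply, hbb, LinearMap.zero_apply]
    exact map_map_pathProd_eq_zero e (fun {i j} _ => a i j) hleib (fun i => by rw [hde, map_zero])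
      (fun {i j : Fin k} (f : i ⟶ j) => map_map_generator_eq_zero e a hleib hde hdc f.down) p
  have hdK : D (a K K) = e K := by simp [hdc]
  have hcorner : ∀ x, e K * x * e K = x * e K :=
    idempotent_mul_mul_idempotent_of_basis e (fun {i j} _ => a i j) horth
      (fun {i j : Fin k} (f : i ⟶ j) => (hcompat i j f.down).1) bb hbb K
      (fun t p => le_antisymm (hKmax t) (le_of_path p))
  have hgen : ∀ s ∈ {x : A | ∃ i' j' : Fin k, (i' = K ∨ j' = K) ∧ x = a i' j'} ∪ {e K},
      e K * s = s := by
    rintro s (⟨i, j, hij, rfl⟩ | rfl)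
    · by_cases hle : i ≤ j
      · obtain rfl : j = K := hij.elim (fun hi => le_antisymm (hKmax j) (hi ▸ hle)) id
        exact (hcompat i j hle).1
      · rw [ha0 i j hle, mul_zero]
    · simpa using horth K K
  refine ⟨LinearMap.ext hDD, hdK, fun i j hij _ => map_generator_mem_adjoin e a hdc K hij, ?_⟩
  exact exists_isQuasiIso_mkQ_of_map_eq hleib hDD (hde K) hdK
    (hgen _ (Or.inl ⟨K, K, .inl rfl, rfl⟩)) (hI ▸ mem_twoSidedSpan_iff (Or.inr rfl) hgen hcorner)

/-- Over `F₂`, let `A` be the semi-free dg-algebra with idempotents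
`e_1, …, e_k` and generators `a_{ij}` for `i ≤ j`, with
`∂(a_{ij}) = δ_{ij} e_i + Σ_{i<m<j} a_{mj} a_{im}`.  Then `∂² = 0`, `∂(a_{kk}) = e_k`,
`a_{kk}` does not occur in the differential of any other generator, and hence (by the
exact-removal lemma) the quotient of `A` by the two-sided ideal generated by all arrows
through the last vertex (and `e_k`) is quasi-isomorphic to `A`. -/
theorem stmt15 (k : ℕ) (hk : 0 < k)
    (A : Type*) [Ring A] [Algebra (ZMod 2) A]
    (e : Fin k → A) (a : Fin k → Fin k → A)
    (ha0 : ∀ i j : Fin k, ¬ i ≤ j → a i j = 0)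
    (horth : ∀ i j, e i * e j = if i = j then e i else 0)
    (hsum : ∑ i, e i = 1)
    (hcompat : ∀ i j : Fin k, i ≤ j → e j * a i j = a i j ∧ a i j * e i = a i j)
    (hfree : ∃ bb : Module.Basis (Σ i : Fin k, Σ j : Fin k, Quiver.Path i j) (ZMod 2) A,
      ∀ (i j : Fin k) (p : Quiver.Path i j),
        bb ⟨i, j, p⟩ = pathProd e (fun {i' j'} _ => a i' j') p)
    (D : A →ₗ[ZMod 2] A)
    (hleib : ∀ x y, D (x * y) = D x * y + x * D y)
    (hde : ∀ i, D (e i) = 0)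
    (hdc : ∀ i j : Fin k, i ≤ j →
      D (a i j) = (if i = j then e i else 0) + ∑ m ∈ Finset.Ioo i j, a m j * a i m)
    (K : Fin k) (hK : K.val = k - 1)
    (I : Submodule (ZMod 2) A)
    (hI : I = twoSidedSpan
      ({x : A | ∃ i' j' : Fin k, (i' = K ∨ j' = K) ∧ x = a i' j'} ∪ {e K})) :
    (D ∘ₗ D = 0) ∧
    (D (a K K) = e K) ∧
    (∀ i j : Fin k, i ≤ j → ¬(i = K ∧ j = K) →
      D (a i j) ∈ Algebra.adjoin (ZMod 2)
        ({x : A | ∃ i' j' : Fin k, ¬(i' = K ∧ j' = K) ∧ x = a i' j'} ∪ Set.range e)) ∧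
    (∃ hsub : I ≤ I.comap D, IsQuasiIso D (Submodule.mapQ I I D hsub) I.mkQ) :=
  stmt15_general k A e a ha0 horth hcompat hfree D hleib hde hdc K hK I hI

end Stmt15
end

section
/- Let H be the A_∞-algebra over F_2 whose underlying module is spanned by idempotents ε_i (degree 0) and arrows α_i: i → i+1 (for i ∈ ℤ/n, n ≥ 2, arrows in degree suitable so that μ_n has degree 2−n applied to degree-1 inputs gives degree 0), with all products of two arrows zero, ε's acting as units, and the single nontrivial higher operation μ_n(α_{i+n−1} ⊗ … ⊗ α_{i+1} ⊗ α_i) = ε_i for each i ∈ ℤ/n, all other μ_k (k ≥ 3) zero on words of arrows. Then the A_∞-relations (Stasheff identities) hold for H. In particular the only identities to check are those involving one μ_n and one μ_2, and these hold because ε_i α_{i+n−1}… and …α_i ε_i contributions cancel in characteristic 2. -/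
/-!
A term of the Stasheff sum is nonzero only if its inner and outer operations are each `μ₂` or
the disk operation `μ_n`, and `μ_n` never feeds into `μ_n`, since it outputs an idempotent and
only accepts arrows. So beyond associativity of `μ₂` (words of length 3) only words of length
`n + 1` matter, with the terms `μ_n(…, μ₂(·, ·), …)`, `μ₂(μ_n(…), ·)` and `μ₂(·, μ_n(…))`.
A nonzero `μ₂` of basis elements has one idempotent fewer than its inputs and `μ_n` needs none,
so such a word contributes only if it has at most one idempotent. With exactly one, `ε_m`, the
two surviving terms absorb `ε_m` into the arrow on its left and on its right (or into the output
of `μ_n` at the ends of the word), and they agree; for a word of arrows the two outer terms agree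
because `α_j` followed by the disk word at `j` is the disk word at `j + 1` followed by `α_j`.
Over `F₂` the terms cancel in pairs.
-/

namespace Stmt17

/-- Basis indices of the minimal model `H` of the θ_n-Legendrian: `Sum.inl i` is the
idempotent `ε_i`, `Sum.inr i` is the arrow `α_i : i → i+1` of the cyclic quiver on `ℤ/n`. -/
abbrev Idx (n : ℕ) := ZMod n ⊕ ZMod n

/-- The underlying `F₂`-module of the minimal model. -/
abbrev H (n : ℕ) := Idx n →₀ ZMod 2

/-- The multiplication `μ₂` on basis elements: the path algebra of the cyclic quiver on
`ℤ/n` with all length-2 paths (products of two arrows) equal to zero, with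
`ε_{i+1} α_i = α_i = α_i ε_i`. -/
noncomputable def basisMul (n : ℕ) : Idx n → Idx n → H n
  | Sum.inl i, Sum.inl j => if i = j then Finsupp.single (Sum.inl i) 1 else 0
  | Sum.inl i, Sum.inr j => if i = j + 1 then Finsupp.single (Sum.inr j) 1 else 0
  | Sum.inr i, Sum.inl j => if i = j then Finsupp.single (Sum.inr i) 1 else 0
  | Sum.inr _, Sum.inr _ => 0

/-- The disk word `α_{i+n-1} ⊗ … ⊗ α_{i+1} ⊗ α_i` (written as a list, leftmost first). -/
def diskWord (n : ℕ) (i : ZMod n) : List (Idx n) :=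
  (List.range n).map fun t => Sum.inr (i + ((n - 1 - t : ℕ) : ZMod n))

open scoped Classical in
/-- The operations `μ_k` of the minimal model, on lists of basis elements: `μ₁ = 0`,
`μ₂` is the multiplication, and for `k ≥ 3` the only nonzero higher operation is
`μ_n(α_{i+n-1} ⊗ … ⊗ α_{i+1} ⊗ α_i) = ε_i`. -/
noncomputable def muHat (n : ℕ) (L : List (Idx n)) : H n :=
  if hL : L.length = 2 then
    basisMul n (L.get ⟨0, by omega⟩) (L.get ⟨1, by omega⟩)
  else if h : 3 ≤ n ∧ ∃ i : ZMod n, L = diskWord n i then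
    Finsupp.single (Sum.inl h.2.choose) 1
  else 0

/-- Evaluation of `μ` on a list of basis elements with one general element of `H`
inserted (the multilinear extension in that slot). -/
noncomputable def muSlot (n : ℕ) (L1 : List (Idx n)) (x : H n) (L2 : List (Idx n)) : H n :=
  x.sum fun b c => c • muHat n (L1 ++ b :: L2)

variable {n : ℕ}

lemma diskWord_eq_map (i : ZMod n) :
    diskWord n i = (List.range n).map fun t : ℕ => Sum.inr (i - 1 - t) := by
  refine List.map_congr_left fun t ht => ?_
  rw [List.mem_range] at ht
  rw [Nat.sub_sub, Nat.cast_sub (by omega), ZMod.natCast_self]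
  push_cast
  ring_nf

lemma diskWord_length (i : ZMod n) : (diskWord n i).length = n := by
  simp [diskWord]

lemma countP_isLeft_diskWord (i : ZMod n) : (diskWord n i).countP Sum.isLeft = 0 := by
  simp [diskWord]

lemma eq_of_diskWord_eq_append_inr_cons {j v : ZMod n} {A B : List (Idx n)}
    (h : diskWord n j = A ++ Sum.inr v :: B) : v = j - 1 - A.length := by
  have hlen : A.length < n := by
    have := congrArg List.length h
    rw [diskWord_length, List.length_append, List.length_cons] at this
    omega
  have := congrArg (·[A.length]?) h
  simpa [diskWord_eq_map, hlen, eq_comm] using this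

lemma eq_of_diskWord_eq_append_singleton {j u : ZMod n} {A : List (Idx n)}
    (h : diskWord n j = A ++ [Sum.inr u]) : u = j := by
  have hlen : A.length + 1 = n := by
    simpa [diskWord_length] using (congrArg List.length h).symm
  have hA : ((A.length + 1 : ℕ) : ZMod n) = 0 := by rw [hlen, ZMod.natCast_self]
  push_cast at hA
  rw [eq_of_diskWord_eq_append_inr_cons h]
  linear_combination -hA

lemma diskWord_injective (hn : 0 < n) : Function.Injective (diskWord n) := by
  intro i j h
  obtain ⟨k, rfl⟩ := Nat.exists_eq_add_one_of_ne_zero hn.ne'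
  have := congrArg (·[0]?) h
  simpa [diskWord_eq_map, List.range_succ_eq_map] using this

lemma diskWord_succ_append (j : ZMod n) :
    diskWord n (j + 1) ++ [Sum.inr j] = Sum.inr j :: diskWord n j := by
  rw [diskWord_eq_map, diskWord_eq_map]
  calc _ = (List.range (n + 1)).map fun t : ℕ => (Sum.inr (j - t) : Idx n) := by
        simp [List.range_succ, add_sub_cancel_right]
    _ = _ := by
        simp [List.range_succ_eq_map, Function.comp_def, sub_sub, add_comm]

lemma H_add_self_eq_zero (x : H n) : x + x = 0 := by
  rw [← two_nsmul, ZModModule.char_nsmul_eq_zero]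

lemma muHat_pair (a b : Idx n) : muHat n [a, b] = basisMul n a b := by
  simp [muHat]

lemma muHat_diskWord (hn : 3 ≤ n) (i : ZMod n) :
    muHat n (diskWord n i) = Finsupp.single (Sum.inl i) 1 := by
  have h : 3 ≤ n ∧ ∃ j, diskWord n i = diskWord n j := ⟨hn, i, rfl⟩
  rw [muHat, dif_neg (by rw [diskWord_length]; omega), dif_pos h,
    ← diskWord_injective (by omega) h.2.choose_spec]

lemma muHat_ne_zero {W : List (Idx n)} (h : muHat n W ≠ 0) :
    W.length = 2 ∨ 3 ≤ n ∧ ∃ i, W = diskWord n i := by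
  unfold muHat at h
  split_ifs at h with h2 hd
  exacts [Or.inl h2, Or.inr hd, absurd rfl h]

lemma countP_isLeft_eq_zero_of_muHat_ne_zero {W : List (Idx n)} (h2 : W.length ≠ 2)
    (h : muHat n W ≠ 0) : W.countP Sum.isLeft = 0 := by
  obtain h2' | ⟨-, i, rfl⟩ := muHat_ne_zero h
  exacts [absurd h2' h2, countP_isLeft_diskWord i]

lemma muSlot_zero (A C : List (Idx n)) : muSlot n A 0 C = 0 := by
  simp [muSlot]

lemma muSlot_single (A C : List (Idx n)) (b : Idx n) :
    muSlot n A (Finsupp.single b 1) C = muHat n (A ++ b :: C) := by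
  rw [muSlot, Finsupp.sum_single_index (by simp), one_smul]

lemma ne_zero_of_muSlot_ne_zero {A C : List (Idx n)} {x : H n} (h : muSlot n A x C ≠ 0) :
    x ≠ 0 := by
  rintro rfl
  exact h (muSlot_zero A C)

lemma exists_muHat_ne_zero_of_muSlot_ne_zero {A C : List (Idx n)} {x : H n}
    (h : muSlot n A x C ≠ 0) : ∃ b, muHat n (A ++ b :: C) ≠ 0 := by
  by_contra! hb
  exact h (Finset.sum_eq_zero fun b _ => by simp only [hb b, smul_zero])

lemma basisMul_eq_zero_or (a b : Idx n) :
    basisMul n a b = 0 ∨ ∃ d, basisMul n a b = Finsupp.single d 1 ∧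
      [a, b].countP Sum.isLeft = [d].countP Sum.isLeft + 1 := by
  rcases a with i | i <;> rcases b with j | j <;> rw [basisMul] <;>
    (try split_ifs) <;> first | exact Or.inl rfl | exact Or.inr ⟨_, rfl, rfl⟩

lemma muSlot_basisMul_assoc (a b c : Idx n) :
    muSlot n [] (basisMul n a b) [c] = muSlot n [a] (basisMul n b c) [] := by
  rcases a with i | i <;> rcases b with j | j <;> rcases c with k | k <;>
    simp only [basisMul] <;> (try split_ifs) <;>
    simp_all [muSlot_zero, muSlot_single, muHat_pair, basisMul]

lemma muSlot_basisMul_inl_inr {B : List (Idx n)} (hB : B.length ≠ 1) (m v : ZMod n) :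
    muSlot n [] (basisMul n (Sum.inl m) (Sum.inr v)) B =
      muSlot n [Sum.inl m] (muHat n (Sum.inr v :: B)) [] := by
  rw [basisMul]
  by_cases hd : muHat n (Sum.inr v :: B) = 0
  · split_ifs <;> simp [muSlot_single, muSlot_zero, hd]
  obtain h2 | ⟨hn, j, hj⟩ := muHat_ne_zero hd
  · rw [List.length_cons] at h2
    omega
  have hv : v = j - 1 := by simpa using eq_of_diskWord_eq_append_inr_cons (A := []) hj.symm
  rw [hj, muHat_diskWord hn, muSlot_single, List.singleton_append, muHat_pair, basisMul, hv,
    sub_add_cancel]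
  split_ifs with hmj
  · rw [muSlot_single, List.nil_append, ← hv, hj, muHat_diskWord hn, hmj]
  · rfl

lemma muSlot_basisMul_inr_inl {A : List (Idx n)} (hA : A.length ≠ 1) (u m : ZMod n) :
    muSlot n A (basisMul n (Sum.inr u) (Sum.inl m)) [] =
      muSlot n [] (muHat n (A ++ [Sum.inr u])) [Sum.inl m] := by
  rw [basisMul]
  by_cases hd : muHat n (A ++ [Sum.inr u]) = 0
  · split_ifs <;> simp [muSlot_single, muSlot_zero, hd]
  obtain h2 | ⟨hn, j, hj⟩ := muHat_ne_zero hd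
  · rw [List.length_append, List.length_singleton] at h2
    omega
  have hu : u = j := eq_of_diskWord_eq_append_singleton hj.symm
  rw [hj, muHat_diskWord hn, muSlot_single, List.nil_append, muHat_pair, basisMul, hu]
  split_ifs with hjm
  · rw [muSlot_single, ← hu, hj, muHat_diskWord hn, hu]
  · rfl

lemma muSlot_basisMul_inr_inl_cons (A B : List (Idx n)) (u m v : ZMod n) :
    muSlot n A (basisMul n (Sum.inr u) (Sum.inl m)) (Sum.inr v :: B) =
      muSlot n (A ++ [Sum.inr u]) (basisMul n (Sum.inl m) (Sum.inr v)) B := by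
  rw [basisMul, basisMul]
  have hW : A ++ [Sum.inr u] ++ Sum.inr v :: B = A ++ Sum.inr u :: Sum.inr v :: B := by simp
  by_cases hd : muHat n (A ++ Sum.inr u :: Sum.inr v :: B) = 0
  · split_ifs <;> simp [muSlot_single, muSlot_zero, hd]
  obtain h2 | ⟨-, j, hj⟩ := muHat_ne_zero hd
  · rw [List.length_append, List.length_cons, List.length_cons] at h2
    obtain ⟨rfl, rfl⟩ : A = [] ∧ B = [] :=
      ⟨List.eq_nil_of_length_eq_zero (by omega), List.eq_nil_of_length_eq_zero (by omega)⟩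
    exact absurd (by rw [List.nil_append, muHat_pair, basisMul]) hd
  have hu := eq_of_diskWord_eq_append_inr_cons hj.symm
  have hv := eq_of_diskWord_eq_append_inr_cons (hj.symm.trans hW.symm)
  have huv : u = v + 1 := by
    rw [hu, hv, List.length_append, List.length_singleton, Nat.cast_add, Nat.cast_one]
    ring
  subst huv
  rcases eq_or_ne m (v + 1) with rfl | hm
  · simp [muSlot_single, hW]
  · simp [hm, hm.symm, muSlot_zero]

/-- Both sides are `α_t` if `W ++ [α_t]` is `α_t` followed by the disk word at `t`, and `0`
otherwise. -/
lemma muSlot_muHat_rotate (hn : 3 ≤ n) {W W' : List (Idx n)} (hW : W.length = n)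
    {t u : ZMod n} (h : W ++ [Sum.inr t] = Sum.inr u :: W') :
    muSlot n [] (muHat n W) [Sum.inr t] = muSlot n [Sum.inr u] (muHat n W') [] := by
  by_cases hrot : ∃ j, W ++ [Sum.inr t] = Sum.inr j :: diskWord n j
  · obtain ⟨j, hj⟩ := hrot
    obtain ⟨rfl, ht⟩ := List.append_inj' (hj.trans (diskWord_succ_append j).symm) rfl
    obtain ⟨hu, rfl⟩ := List.cons_eq_cons.mp (h.symm.trans hj)
    obtain rfl := Sum.inr_injective hu
    obtain rfl : t = u := by simpa using ht
    simp [muHat_diskWord hn, muSlot_single, muHat_pair, basisMul]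
  have hT0 : muSlot n [] (muHat n W) [Sum.inr t] = 0 := by
    by_contra hne
    obtain h2 | ⟨-, i, rfl⟩ := muHat_ne_zero (ne_zero_of_muSlot_ne_zero hne)
    · omega
    rw [muHat_diskWord hn, muSlot_single, List.nil_append, muHat_pair, basisMul] at hne
    split_ifs at hne with hi
    exacts [hrot ⟨t, by rw [hi, diskWord_succ_append]⟩, hne rfl]
  have hT1 : muSlot n [Sum.inr u] (muHat n W') [] = 0 := by
    by_contra hne
    have hW' : W'.length = n := by simpa [hW] using (congrArg List.length h).symm
    obtain h2 | ⟨-, j, rfl⟩ := muHat_ne_zero (ne_zero_of_muSlot_ne_zero hne)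
    · omega
    rw [muHat_diskWord hn, muSlot_single, List.singleton_append, muHat_pair, basisMul] at hne
    split_ifs at hne with huj
    exacts [hrot ⟨j, by rw [h, huj]⟩, hne rfl]
  rw [hT0, hT1]

noncomputable def stasheffTerm (n : ℕ) (L : List (Idx n)) (r s : ℕ) : H n :=
  muSlot n (L.take r) (muHat n ((L.drop r).take s)) (L.drop (r + s))

noncomputable def stasheffSum (n : ℕ) (L : List (Idx n)) : H n :=
  ∑ r ∈ Finset.range (L.length + 1), ∑ s ∈ Finset.Icc 1 (L.length - r), stasheffTerm n L r s

lemma stasheffTerm_of_eq_append {L A B C : List (Idx n)} {r s : ℕ} (hL : L = A ++ B ++ C)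
    (hr : A.length = r) (hs : B.length = s) :
    stasheffTerm n L r s = muSlot n A (muHat n B) C := by
  subst hL hr hs
  simp [stasheffTerm, List.drop_append, List.drop_eq_nil_of_le]

lemma sum_range_sum_Icc_eq_sum_of_support {M : Type*} [AddCommMonoid M] (k : ℕ)
    (f : ℕ → ℕ → M) (S : Finset (ℕ × ℕ)) (hS : ∀ p ∈ S, 1 ≤ p.2 ∧ p.1 + p.2 ≤ k)
    (hf : ∀ r s, 1 ≤ s → r + s ≤ k → (r, s) ∉ S → f r s = 0) :
    ∑ r ∈ Finset.range (k + 1), ∑ s ∈ Finset.Icc 1 (k - r), f r s = ∑ p ∈ S, f p.1 p.2 := by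
  have hT : ∀ p : ℕ × ℕ, p ∈ (Finset.range (k + 1) ×ˢ Finset.Icc 1 k).filter
      (fun p => p.1 + p.2 ≤ k) ↔ p.1 ∈ Finset.range (k + 1) ∧ p.2 ∈ Finset.Icc 1 (k - p.1) := by
    intro p
    simp only [Finset.mem_filter, Finset.mem_product, Finset.mem_range, Finset.mem_Icc]
    omega
  rw [← Finset.sum_finset_product' _ _ _ hT]
  refine (Finset.sum_subset (fun p hp => ?_) fun p hp hpS => ?_).symm
  · have := hS p hp
    simp only [Finset.mem_filter, Finset.mem_product, Finset.mem_range, Finset.mem_Icc]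
    omega
  · simp only [Finset.mem_filter, Finset.mem_product, Finset.mem_range, Finset.mem_Icc] at hp
    exact hf _ _ hp.1.2.1 hp.2 hpS

lemma stasheffTerm_ne_zero {L : List (Idx n)} {r s : ℕ} (hrs : r + s ≤ L.length)
    (h : stasheffTerm n L r s ≠ 0) :
    s = 2 ∧ (L.length = 3 ∨ 3 ≤ n ∧ L.length = n + 1) ∨ s = n ∧ 3 ≤ n ∧ L.length = n + 1 := by
  unfold stasheffTerm at h
  have hW : ((L.drop r).take s).length = s := by
    rw [List.length_take, List.length_drop]
    omega
  have hout : ∀ b, (L.take r ++ b :: L.drop (r + s)).length + s = L.length + 1 := by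
    intro b
    rw [List.length_append, List.length_cons, List.length_take, List.length_drop]
    omega
  obtain ⟨b, hb⟩ := exists_muHat_ne_zero_of_muSlot_ne_zero h
  obtain hW2 | ⟨hn, i, hi⟩ := muHat_ne_zero (ne_zero_of_muSlot_ne_zero h)
  · have := hout b
    obtain h2 | ⟨hn, j, hj⟩ := muHat_ne_zero hb
    · omega
    · rw [hj, diskWord_length] at this
      omega
  · rw [hi, muHat_diskWord hn, muSlot_single] at h
    rw [hi, diskWord_length] at hW
    obtain h2 | ⟨-, j, hj⟩ := muHat_ne_zero h
    · have := hout (Sum.inl i)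
      omega
    · have := congrArg (List.countP Sum.isLeft) hj
      simp [countP_isLeft_diskWord] at this

lemma stasheffSum_eq_zero_of_length_eq_three {L : List (Idx n)} (hL : L.length = 3) :
    stasheffSum n L = 0 := by
  rw [stasheffSum, sum_range_sum_Icc_eq_sum_of_support _ _ {(0, 2), (1, 2)}
    (by simp [hL]) fun r s hs hrs hS => by_contra fun h => ?_]
  · obtain ⟨a, b, c, rfl⟩ := List.length_eq_three.mp hL
    rw [Finset.sum_pair (by simp)]
    simp [stasheffTerm, muHat_pair, muSlot_basisMul_assoc, H_add_self_eq_zero]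
  · have := stasheffTerm_ne_zero (hL ▸ hrs) h
    simp only [Finset.mem_insert, Finset.mem_singleton, Prod.mk.injEq, not_or] at hS
    omega

lemma stasheffSum_eq_zero_of_length_ne {L : List (Idx n)} (h3 : L.length ≠ 3)
    (hn : ¬(3 ≤ n ∧ L.length = n + 1)) : stasheffSum n L = 0 := by
  rw [stasheffSum, sum_range_sum_Icc_eq_sum_of_support _ _ ∅ (by simp)
    fun r s hs hrs _ => by_contra fun h => ?_, Finset.sum_empty]
  have := stasheffTerm_ne_zero hrs h
  omega

lemma stasheffSum_eq_of_length_eq_succ (hn : 3 ≤ n) {L : List (Idx n)}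
    (hL : L.length = n + 1) :
    stasheffSum n L = ∑ r ∈ Finset.range n, stasheffTerm n L r 2 +
      (stasheffTerm n L 0 n + stasheffTerm n L 1 n) := by
  have hdisj : Disjoint (Finset.range n ×ˢ {2}) {(0, n), (1, n)} := by
    simp only [Finset.disjoint_left, Finset.mem_product, Finset.mem_singleton,
      Finset.mem_insert, Prod.ext_iff]
    omega
  rw [stasheffSum, sum_range_sum_Icc_eq_sum_of_support _ _
    (Finset.range n ×ˢ {2} ∪ {(0, n), (1, n)}) ?_ ?_, Finset.sum_union hdisj,
    Finset.sum_product, Finset.sum_pair (by simp)]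
  · simp only [Finset.sum_singleton]
  · intro p hp
    simp only [Finset.mem_union, Finset.mem_product, Finset.mem_range, Finset.mem_singleton,
      Finset.mem_insert] at hp
    rcases hp with ⟨hp1, hp2⟩ | rfl | rfl
    · omega
    all_goals dsimp only; omega
  · intro r s hs hrs hS
    by_contra h
    have := stasheffTerm_ne_zero hrs h
    simp only [Finset.mem_union, Finset.mem_product, Finset.mem_range, Finset.mem_singleton,
      Finset.mem_insert, Prod.ext_iff, not_or] at hS
    omega

lemma countP_isLeft_of_stasheffTerm_two_ne_zero {L : List (Idx n)} {r : ℕ} (hL : L.length ≠ 3)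
    (hr : r + 2 ≤ L.length) (h : stasheffTerm n L r 2 ≠ 0) :
    (L.take r).countP Sum.isLeft = 0 ∧ (L.drop (r + 2)).countP Sum.isLeft = 0 ∧
      L.countP Sum.isLeft = 1 := by
  obtain ⟨a, b, hab⟩ := List.length_eq_two.mp
    (show ((L.drop r).take 2).length = 2 by rw [List.length_take, List.length_drop]; omega)
  have hsplit : L = L.take r ++ [a, b] ++ L.drop (r + 2) := by
    rw [← hab, List.append_assoc, ← List.drop_drop, List.take_append_drop, List.take_append_drop]
  rw [stasheffTerm_of_eq_append (s := 2) hsplit (by rw [List.length_take]; omega) rfl,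
    muHat_pair] at h
  obtain h0 | ⟨d, hd, hcount⟩ := basisMul_eq_zero_or a b
  · exact absurd (by rw [h0, muSlot_zero]) h
  rw [hd, muSlot_single] at h
  have hlen : (L.take r ++ d :: L.drop (r + 2)).length ≠ 2 := by
    rw [List.length_append, List.length_cons, List.length_take, List.length_drop]
    omega
  have h0 := countP_isLeft_eq_zero_of_muHat_ne_zero hlen h
  rw [← List.singleton_append, List.countP_append, List.countP_append] at h0
  refine ⟨by omega, by omega, ?_⟩
  rw [hsplit, List.countP_append, List.countP_append]
  omega

lemma countP_isLeft_of_stasheffTerm_ne_zero {L : List (Idx n)} {r s : ℕ} (hs : s ≠ 2)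
    (hrs : r + s ≤ L.length) (h : stasheffTerm n L r s ≠ 0) :
    ((L.drop r).take s).countP Sum.isLeft = 0 :=
  countP_isLeft_eq_zero_of_muHat_ne_zero (by rw [List.length_take, List.length_drop]; omega)
    (ne_zero_of_muSlot_ne_zero h)

lemma stasheffTerm_two_eq_zero_of_countP_ne_one (hn : 3 ≤ n) {L : List (Idx n)}
    (hL : L.length = n + 1) (hc : L.countP Sum.isLeft ≠ 1) :
    ∀ r ∈ Finset.range n, stasheffTerm n L r 2 = 0 := fun r hr => by
  rw [Finset.mem_range] at hr
  by_contra h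
  exact hc (countP_isLeft_of_stasheffTerm_two_ne_zero (by omega) (by omega) h).2.2

lemma stasheffSum_eq_zero_of_two_le_countP (hn : 3 ≤ n) {L : List (Idx n)}
    (hL : L.length = n + 1) (hc : 2 ≤ L.countP Sum.isLeft) : stasheffSum n L = 0 := by
  have hT0 : stasheffTerm n L 0 n = 0 := by
    by_contra h
    have h0 := countP_isLeft_of_stasheffTerm_ne_zero (by omega) (by omega) h
    rw [List.drop_zero] at h0
    have hsplit := congrArg (List.countP Sum.isLeft) (List.take_append_drop n L)
    have h1 := (L.drop n).countP_le_length (p := Sum.isLeft)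
    rw [List.countP_append] at hsplit
    rw [List.length_drop] at h1
    omega
  have hT1 : stasheffTerm n L 1 n = 0 := by
    by_contra h
    have h0 := countP_isLeft_of_stasheffTerm_ne_zero (by omega) (by omega) h
    rw [List.take_of_length_le (by rw [List.length_drop]; omega)] at h0
    have hsplit := congrArg (List.countP Sum.isLeft) (List.take_append_drop 1 L)
    have h1 := (L.take 1).countP_le_length (p := Sum.isLeft)
    rw [List.countP_append] at hsplit
    rw [List.length_take] at h1
    omega
  rw [stasheffSum_eq_of_length_eq_succ hn hL,
    Finset.sum_eq_zero (stasheffTerm_two_eq_zero_of_countP_ne_one hn hL (by omega)), hT0, hT1,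
    add_zero, add_zero]

lemma exists_eq_inr_of_countP_isLeft_eq_zero {l : List (Idx n)} (h : l.countP Sum.isLeft = 0)
    {a : Idx n} (ha : a ∈ l) : ∃ t, a = Sum.inr t := by
  rcases a with m | t
  · exact absurd h (List.countP_pos_iff.mpr ⟨_, ha, rfl⟩).ne'
  · exact ⟨t, rfl⟩

lemma stasheffSum_eq_zero_of_countP_eq_zero (hn : 3 ≤ n) {L : List (Idx n)}
    (hL : L.length = n + 1) (hc : L.countP Sum.isLeft = 0) : stasheffSum n L = 0 := by
  have hne : L ≠ [] := List.ne_nil_of_length_pos (by omega)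
  obtain ⟨W, x, hWx⟩ := (List.eq_nil_or_concat L).resolve_left hne
  obtain ⟨y, W', hyW⟩ := List.exists_cons_of_ne_nil hne
  rw [List.concat_eq_append] at hWx
  obtain ⟨t, rfl⟩ := exists_eq_inr_of_countP_isLeft_eq_zero hc (a := x) (by simp [hWx])
  obtain ⟨u, rfl⟩ := exists_eq_inr_of_countP_isLeft_eq_zero hc (a := y) (by simp [hyW])
  have hW : W.length = n := by simpa [hWx] using hL
  have hW' : W'.length = n := by simpa [hyW] using hL
  rw [stasheffSum_eq_of_length_eq_succ hn hL,
    Finset.sum_eq_zero (stasheffTerm_two_eq_zero_of_countP_ne_one hn hL (by omega)), zero_add,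
    stasheffTerm_of_eq_append (A := []) (r := 0) (by simpa) rfl hW,
    stasheffTerm_of_eq_append (A := [Sum.inr u]) (C := []) (r := 1) (by simpa) rfl hW',
    muSlot_muHat_rotate hn hW (hWx.symm.trans hyW), H_add_self_eq_zero]

lemma mem_take_append_cons {α : Type*} {A B : List α} {x : α} {r : ℕ} (h : A.length < r) :
    x ∈ (A ++ x :: B).take r :=
  List.mem_take_iff_getElem.mpr
    ⟨A.length, by rw [List.length_append, List.length_cons]; omega, by simp⟩

lemma mem_drop_append_cons {α : Type*} {A B : List α} {x : α} {k : ℕ} (h : k ≤ A.length) :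
    x ∈ (A ++ x :: B).drop k :=
  List.mem_drop_iff_getElem.mpr ⟨A.length - k,
    by rw [List.length_append, List.length_cons]; omega, by simp [Nat.add_sub_cancel' h]⟩

section OneIdempotent

variable {L A B : List (Idx n)} {m : ZMod n}

lemma stasheffTerm_two_eq_zero_of_eq_append_inl_cons (hLA : L = A ++ Sum.inl m :: B)
    (hL : L.length = n + 1) (hn : 3 ≤ n) {r : ℕ} (hr : r < n) (h1 : r + 1 ≠ A.length)
    (h2 : r ≠ A.length) : stasheffTerm n L r 2 = 0 := by
  by_contra h
  obtain ⟨htake, hdrop, -⟩ := countP_isLeft_of_stasheffTerm_two_ne_zero (by omega) (by omega) h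
  subst hLA
  rcases lt_or_gt_of_ne h2 with hlt | hgt
  · exact hdrop.not_gt (List.countP_pos_iff.mpr ⟨_, mem_drop_append_cons (by omega), rfl⟩)
  · exact htake.not_gt (List.countP_pos_iff.mpr ⟨_, mem_take_append_cons hgt, rfl⟩)

lemma stasheffTerm_zero_eq_zero_of_eq_append_inl_cons (hLA : L = A ++ Sum.inl m :: B)
    (hL : L.length = n + 1) (hn : 3 ≤ n) (hA : A.length < n) : stasheffTerm n L 0 n = 0 := by
  by_contra h
  have h0 := countP_isLeft_of_stasheffTerm_ne_zero (by omega) (by omega) h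
  rw [List.drop_zero, hLA] at h0
  exact h0.not_gt (List.countP_pos_iff.mpr ⟨_, mem_take_append_cons hA, rfl⟩)

lemma stasheffTerm_one_eq_zero_of_eq_append_inl_cons (hLA : L = A ++ Sum.inl m :: B)
    (hL : L.length = n + 1) (hn : 3 ≤ n) (hA : 1 ≤ A.length) : stasheffTerm n L 1 n = 0 := by
  by_contra h
  have h0 := countP_isLeft_of_stasheffTerm_ne_zero (by omega) (by omega) h
  rw [List.take_of_length_le (by rw [List.length_drop]; omega), hLA] at h0
  exact h0.not_gt (List.countP_pos_iff.mpr ⟨_, mem_drop_append_cons hA, rfl⟩)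

end OneIdempotent

lemma stasheffSum_inl_cons_eq_zero (hn : 3 ≤ n) {B : List (Idx n)} (hB : B.length + 1 = n)
    (m v : ZMod n) : stasheffSum n (Sum.inl m :: Sum.inr v :: B) = 0 := by
  have hLA : Sum.inl m :: Sum.inr v :: B = [] ++ Sum.inl m :: Sum.inr v :: B := rfl
  have hL : (Sum.inl m :: Sum.inr v :: B).length = n + 1 := by
    rw [List.length_cons, List.length_cons]
    omega
  rw [stasheffSum_eq_of_length_eq_succ hn hL,
    Finset.sum_eq_single_of_mem 0 (Finset.mem_range.mpr (by omega)) fun r hr hr0 =>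
      stasheffTerm_two_eq_zero_of_eq_append_inl_cons hLA hL hn (Finset.mem_range.mp hr)
        r.succ_ne_zero hr0,
    stasheffTerm_zero_eq_zero_of_eq_append_inl_cons hLA hL hn (by rw [List.length_nil]; omega),
    zero_add,
    stasheffTerm_of_eq_append (L := Sum.inl m :: Sum.inr v :: B) (A := [])
      (B := [Sum.inl m, Sum.inr v]) (C := B) (r := 0) (s := 2) rfl rfl rfl,
    stasheffTerm_of_eq_append (A := [Sum.inl m]) (B := Sum.inr v :: B) (C := []) (r := 1)
      (by rw [List.append_nil]; rfl) rfl (by rw [List.length_cons]; omega),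
    muHat_pair, muSlot_basisMul_inl_inr (by omega), H_add_self_eq_zero]

lemma stasheffSum_append_inr_inl_eq_zero (hn : 3 ≤ n) {A : List (Idx n)} (hA : A.length + 1 = n)
    (u m : ZMod n) : stasheffSum n (A ++ [Sum.inr u, Sum.inl m]) = 0 := by
  have hLA : A ++ [Sum.inr u, Sum.inl m] = (A ++ [Sum.inr u]) ++ Sum.inl m :: [] := by simp
  have hL : (A ++ [Sum.inr u, Sum.inl m]).length = n + 1 := by
    rw [List.length_append, List.length_cons, List.length_singleton]
    omega
  have hA' : (A ++ [Sum.inr u]).length = A.length + 1 := by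
    rw [List.length_append, List.length_singleton]
  rw [stasheffSum_eq_of_length_eq_succ hn hL,
    Finset.sum_eq_single_of_mem A.length (Finset.mem_range.mpr (by omega)) fun r hr hrA =>
      stasheffTerm_two_eq_zero_of_eq_append_inl_cons hLA hL hn (Finset.mem_range.mp hr)
        (by omega) (by have := Finset.mem_range.mp hr; omega),
    stasheffTerm_one_eq_zero_of_eq_append_inl_cons hLA hL hn (by omega), add_zero,
    stasheffTerm_of_eq_append (A := A) (B := [Sum.inr u, Sum.inl m]) (C := []) (s := 2)
      (List.append_nil _).symm rfl rfl,
    stasheffTerm_of_eq_append (A := []) (B := A ++ [Sum.inr u]) (C := [Sum.inl m]) (r := 0)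
      hLA rfl (by omega),
    muHat_pair, muSlot_basisMul_inr_inl (by omega), H_add_self_eq_zero]

lemma stasheffSum_inr_inl_inr_eq_zero (hn : 3 ≤ n) {A B : List (Idx n)}
    (hAB : A.length + B.length + 2 = n) (u m v : ZMod n) :
    stasheffSum n (A ++ Sum.inr u :: Sum.inl m :: Sum.inr v :: B) = 0 := by
  have hLA : A ++ Sum.inr u :: Sum.inl m :: Sum.inr v :: B =
      (A ++ [Sum.inr u]) ++ Sum.inl m :: Sum.inr v :: B := by simp
  have hL : (A ++ Sum.inr u :: Sum.inl m :: Sum.inr v :: B).length = n + 1 := by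
    simp only [List.length_append, List.length_cons]
    omega
  have hA' : (A ++ [Sum.inr u]).length = A.length + 1 := by
    rw [List.length_append, List.length_singleton]
  rw [stasheffSum_eq_of_length_eq_succ hn hL,
    Finset.sum_eq_add_of_mem A.length (A.length + 1) (Finset.mem_range.mpr (by omega))
      (Finset.mem_range.mpr (by omega)) (by omega) fun r hr hrA =>
        stasheffTerm_two_eq_zero_of_eq_append_inl_cons hLA hL hn (Finset.mem_range.mp hr)
          (by omega) (by omega),
    stasheffTerm_zero_eq_zero_of_eq_append_inl_cons hLA hL hn (by omega),
    stasheffTerm_one_eq_zero_of_eq_append_inl_cons hLA hL hn (by omega), add_zero, add_zero,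
    stasheffTerm_of_eq_append (A := A) (B := [Sum.inr u, Sum.inl m]) (C := Sum.inr v :: B)
      (s := 2) (by simp) rfl rfl,
    stasheffTerm_of_eq_append (A := A ++ [Sum.inr u]) (B := [Sum.inl m, Sum.inr v]) (C := B)
      (s := 2) (by simp) hA' rfl,
    muHat_pair, muHat_pair, muSlot_basisMul_inr_inl_cons, H_add_self_eq_zero]

lemma stasheffSum_eq_zero_of_countP_eq_one (hn : 3 ≤ n) {L : List (Idx n)}
    (hL : L.length = n + 1) (hc : L.countP Sum.isLeft = 1) : stasheffSum n L = 0 := by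
  obtain ⟨x, hx, hxl⟩ := List.countP_pos_iff.mp (show 0 < L.countP Sum.isLeft by omega)
  obtain ⟨m, rfl⟩ : ∃ m, x = Sum.inl m := by
    rcases x with m | t
    exacts [⟨m, rfl⟩, absurd hxl (by simp)]
  obtain ⟨A, B, rfl⟩ := List.append_of_mem hx
  rw [List.countP_append, List.countP_cons_of_pos hxl] at hc
  rw [List.length_append, List.length_cons] at hL
  have hA : A.countP Sum.isLeft = 0 := by omega
  have hB : B.countP Sum.isLeft = 0 := by omega
  rcases A.eq_nil_or_concat with rfl | ⟨A, a, rfl⟩ <;> rcases B with _ | ⟨b, B⟩ <;>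
    simp only [List.length_nil, List.length_cons, List.length_concat] at hL
  · omega
  · obtain ⟨v, rfl⟩ := exists_eq_inr_of_countP_isLeft_eq_zero hB List.mem_cons_self
    exact stasheffSum_inl_cons_eq_zero hn (by omega) m v
  · obtain ⟨u, rfl⟩ := exists_eq_inr_of_countP_isLeft_eq_zero hA (a := a) (by simp)
    rw [List.concat_eq_append, List.append_assoc, List.singleton_append]
    exact stasheffSum_append_inr_inl_eq_zero hn (by omega) u m
  · obtain ⟨u, rfl⟩ := exists_eq_inr_of_countP_isLeft_eq_zero hA (a := a) (by simp)
    obtain ⟨v, rfl⟩ := exists_eq_inr_of_countP_isLeft_eq_zero hB List.mem_cons_self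
    rw [List.concat_eq_append, List.append_assoc, List.singleton_append]
    exact stasheffSum_inr_inl_inr_eq_zero hn (by omega) u m v

lemma stasheffSum_eq_zero_of_length_eq_succ (hn : 3 ≤ n) {L : List (Idx n)}
    (hL : L.length = n + 1) : stasheffSum n L = 0 := by
  rcases Nat.lt_trichotomy (L.countP Sum.isLeft) 1 with hc | hc | hc
  · exact stasheffSum_eq_zero_of_countP_eq_zero hn hL (by omega)
  · exact stasheffSum_eq_zero_of_countP_eq_one hn hL hc
  · exact stasheffSum_eq_zero_of_two_le_countP hn hL hc

theorem stmt17_general (n : ℕ) (L : List (Idx n)) :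
    ∑ r ∈ Finset.range (L.length + 1), ∑ s ∈ Finset.Icc 1 (L.length - r),
      muSlot n (L.take r) (muHat n ((L.drop r).take s)) (L.drop (r + s)) = 0 := by
  change stasheffSum n L = 0
  by_cases h3 : L.length = 3
  · exact stasheffSum_eq_zero_of_length_eq_three h3
  by_cases hnL : 3 ≤ n ∧ L.length = n + 1
  · exact stasheffSum_eq_zero_of_length_eq_succ hnL.1 hnL.2
  · exact stasheffSum_eq_zero_of_length_ne h3 hnL

/-- the operations `μ_k` of the minimal model of the Chekanov–Eliashberg
algebra of the θ_n-Legendrian satisfy the A_∞-relations (Stasheff identities): for every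
word `L` of basis elements, the sum over all ways of applying an inner operation to a
consecutive subword and an outer operation to the result vanishes (over `F₂`). -/
theorem stmt17 (n : ℕ) (hn : 2 ≤ n) (L : List (Idx n)) (hL : L ≠ []) :
    ∑ r ∈ Finset.range (L.length + 1), ∑ s ∈ Finset.Icc 1 (L.length - r),
      muSlot n (L.take r) (muHat n ((L.drop r).take s)) (L.drop (r + s)) = 0 :=
  stmt17_general n L

end Stmt17
end
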